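/- arXiv:2107.01109 — 5 statements merged into one kernel-verified Lean document; each statement's English description precedes it below -/
import Mathlib

section
/- Let α, β ∈ ℝ \ {0} have the same sign. Then the operator H_{α,β,1/2} on ℓ²(F·(1/2)) has no eigenvalues; that is, there exist no λ ∈ ℂ and no nonzero f ∈ ℓ²(F·(1/2)) with H_{α,β,1/2} f = λf. -/
open MeasureTheory

set_option maxHeartbeats 2000000

noncomputable section

/-- The unit interval `[0,1]` as a type. -/
abbrev I01 : Type := Set.Icc (0:ℝ) 1

/-- The group of bijections of `[0,1]` generated by `a` and `b`. -/
def thompsonSubgroup (a b : Equiv.Perm I01) : Subgroup (Equiv.Perm I01) :=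
  Subgroup.closure {a, b}

/-- The orbit `F·x₀` of `x₀` under the group generated by `a` and `b`. -/
def orbitSet (a b : Equiv.Perm I01) (x₀ : I01) : Set I01 :=
  MulAction.orbit (thompsonSubgroup a b) x₀

lemma mem_thompson_a (a b : Equiv.Perm I01) : a ∈ thompsonSubgroup a b :=
  Subgroup.subset_closure (Set.mem_insert _ _)

lemma mem_thompson_b (a b : Equiv.Perm I01) : b ∈ thompsonSubgroup a b :=
  Subgroup.subset_closure (Set.mem_insert_of_mem _ rfl)

lemma smul_mem_orbitSet {a b : Equiv.Perm I01} {x₀ : I01} {g : Equiv.Perm I01}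
    (hg : g ∈ thompsonSubgroup a b) {y : I01} (hy : y ∈ orbitSet a b x₀) :
    g y ∈ orbitSet a b x₀ := by
  obtain ⟨h, rfl⟩ := hy
  exact ⟨(⟨g, hg⟩ : thompsonSubgroup a b) * h, by simp [mul_smul]⟩

/-- Application of an element `g` of the group generated by `a, b` to a point of the
orbit of `x₀`, as a map of the orbit. -/
def applyOrbit (a b : Equiv.Perm I01) (x₀ : I01) (g : Equiv.Perm I01)
    (hg : g ∈ thompsonSubgroup a b) (y : orbitSet a b x₀) : orbitSet a b x₀ :=
  ⟨g y.1, smul_mem_orbitSet hg y.2⟩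

/-- `ℓ²(F·x₀)`. -/
abbrev OrbitL2 (a b : Equiv.Perm I01) (x₀ : I01) : Type :=
  lp (fun _ : orbitSet a b x₀ => ℂ) 2

/-- The delta function `δ_{x₀} ∈ ℓ²(F·x₀)`. -/
def deltaAt (a b : Equiv.Perm I01) (x₀ : I01) : OrbitL2 a b x₀ :=
  lp.single 2 (⟨x₀, MulAction.mem_orbit_self x₀⟩ : orbitSet a b x₀) (1:ℂ)

/-- Support of a Borel measure on `ℝ`: points all of whose open neighbourhoods have
positive measure. -/
def msupport (μ : Measure ℝ) : Set ℝ :=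
  {x | ∀ U : Set ℝ, IsOpen U → x ∈ U → 0 < μ U}

/-- The point `1/2 ∈ [0,1]`. -/
def half : I01 := ⟨1/2, by norm_num⟩

namespace NoEig

open Filter


lemma abs_eq_of_Q {μ : ℝ} (hμ : |μ| ≤ 2) {x y : ℂ}
    (hQ : 2*(x * (starRingEnd ℂ) x + y * (starRingEnd ℂ) y)
        - (μ:ℂ)*(x * (starRingEnd ℂ) y + y * (starRingEnd ℂ) x) = 0) :
    ‖x‖ = ‖y‖ := by
  have h1 : x * (starRingEnd ℂ) y + y * (starRingEnd ℂ) x = ((2 * (x * (starRingEnd ℂ) y).re : ℝ) : ℂ) := by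
    have : y * (starRingEnd ℂ) x = (starRingEnd ℂ) (x * (starRingEnd ℂ) y) := by
      simp [map_mul, mul_comm]
    rw [this, Complex.add_conj]
  rw [h1, Complex.mul_conj, Complex.mul_conj] at hQ
  have hre : 2*((Complex.normSq x : ℝ) + Complex.normSq y) - μ * (2*(x * (starRingEnd ℂ) y).re) = 0 := by
    have h2 : ((2*((Complex.normSq x : ℝ) + Complex.normSq y) - μ * (2*(x * (starRingEnd ℂ) y).re) : ℝ) : ℂ) = 0 := by
      push_cast
      push_cast at hQ
      linear_combination hQ
    exact_mod_cast h2
  have hab : (x * (starRingEnd ℂ) y).re ≤ ‖x‖ * ‖y‖ := by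
    calc (x * (starRingEnd ℂ) y).re ≤ ‖x * (starRingEnd ℂ) y‖ := Complex.re_le_norm _
    _ = ‖x‖ * ‖y‖ := by rw [norm_mul]; simp
  have habneg : -(‖x‖ * ‖y‖) ≤ (x * (starRingEnd ℂ) y).re := by
    have := Complex.re_le_norm (-(x * (starRingEnd ℂ) y))
    have h3 : ‖-(x * (starRingEnd ℂ) y)‖ = ‖x‖ * ‖y‖ := by
      rw [norm_neg, norm_mul]; simp
    simp only [Complex.neg_re] at this
    linarith [this, h3.le]
  have hx2 : Complex.normSq x = (‖x‖)^2 := (Complex.sq_norm x).symm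
  have hy2 : Complex.normSq y = (‖y‖)^2 := (Complex.sq_norm y).symm
  rw [hx2, hy2] at hre
  have h4 : (‖x‖)^2 + (‖y‖)^2 ≤ 2 * (‖x‖ * ‖y‖) := by
    rcases abs_le.mp hμ with ⟨hl, hr⟩
    rcases le_or_gt 0 ((x * (starRingEnd ℂ) y).re) with h | h
    · nlinarith [habneg, hab]
    · nlinarith [habneg, hab]
  have h5 : (‖x‖ - ‖y‖)^2 ≤ 0 := by nlinarith
  have h6 : ‖x‖ - ‖y‖ = 0 := by nlinarith [sq_nonneg (‖x‖ - ‖y‖)]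
  linarith

lemma elliptic {μ : ℝ} (hμ : |μ| ≤ 2) {h : ℕ → ℂ}
    (hrec : ∀ k, h (k+2) = (μ:ℂ) * h (k+1) - h k)
    (hlim : Tendsto h atTop (nhds 0)) : h 0 = 0 := by
  set c : ℕ → ℂ := fun k => (starRingEnd ℂ) (h k) with hc
  have hcrec : ∀ k, c (k+2) = (μ:ℂ) * c (k+1) - c k := by
    intro k
    simp only [hc, hrec k, map_sub, map_mul, Complex.conj_ofReal]
  set Q : ℕ → ℂ := fun k =>
    2*(h (k+1) * c (k+1) + h k * c k) - (μ:ℂ)*(h (k+1) * c k + h k * c (k+1)) with hQdef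
  have hQconst : ∀ k, Q (k+1) = Q k := by
    intro k
    simp only [hQdef, hrec k, hcrec k]
    ring
  have hQ0 : ∀ k, Q k = Q 0 := by
    intro k; induction k with
    | zero => rfl
    | succ n ih => rw [hQconst n, ih]
  have hlim1 : Tendsto (fun k => h (k+1)) atTop (nhds 0) :=
    hlim.comp (tendsto_add_atTop_nat 1)
  have hclim : Tendsto c atTop (nhds 0) := by
    have : Continuous (starRingEnd ℂ) := Complex.continuous_conj
    rw [hc]; simpa [Function.comp_def] using (this.tendsto 0).comp hlim
  have hclim1 : Tendsto (fun k => c (k+1)) atTop (nhds 0) :=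
    hclim.comp (tendsto_add_atTop_nat 1)
  have hQlim : Tendsto Q atTop (nhds 0) := by
    have : Tendsto Q atTop (nhds (2*((0:ℂ)*0 + 0*0) - (μ:ℂ)*(0*0+0*0))) := by
      apply Tendsto.sub
      · exact ((hlim1.mul hclim1).add (hlim.mul hclim)).const_mul 2
      · exact ((hlim1.mul hclim).add (hlim.mul hclim1)).const_mul (μ:ℂ)
    simpa using this
  have hQzero : Q 0 = 0 := by
    have : Tendsto (fun _ : ℕ => Q 0) atTop (nhds (Q 0)) := tendsto_const_nhds
    have h2 : Tendsto (fun k => Q k) atTop (nhds (Q 0)) := by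
      simpa only [hQ0] using this
    exact tendsto_nhds_unique h2 hQlim
  have habs : ∀ k, ‖h (k+1)‖ = ‖h k‖ := by
    intro k
    have : Q k = 0 := by rw [hQ0 k, hQzero]
    exact abs_eq_of_Q hμ this
  have hconst : ∀ k, ‖h k‖ = ‖h 0‖ := by
    intro k; induction k with
    | zero => rfl
    | succ n ih => rw [habs n, ih]
  have : Tendsto (fun k => ‖h k‖) atTop (nhds 0) := by
    simpa [Function.comp_def] using (continuous_norm.tendsto 0).comp hlim
  have h0 : ‖h 0‖ = 0 := by
    have h2 : Tendsto (fun k => ‖h k‖) atTop (nhds (‖h 0‖)) := by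
      simp only [hconst]; exact tendsto_const_nhds
    exact tendsto_nhds_unique h2 this
  simpa using h0

lemma hyp_root {μ : ℝ} (hμ : 2 < |μ|) :
    ∃ r : ℝ, r ≠ 0 ∧ |r| < 1 ∧ r^2 - μ*r + 1 = 0 := by
  have hd0 : 0 ≤ μ^2 - 4 := by
    have := sq_abs μ
    nlinarith [hμ]
  set d := Real.sqrt (μ^2 - 4) with hd
  have hdsq : d^2 = μ^2 - 4 := Real.sq_sqrt hd0
  have hdnn : 0 ≤ d := Real.sqrt_nonneg _
  rcases le_or_gt 0 μ with hpos | hneg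
  · have hμ2 : 2 < μ := by rwa [abs_of_nonneg hpos] at hμ
    have hden : 2 < μ + d := by linarith
    refine ⟨2/(μ+d), by positivity, ?_, ?_⟩
    · rw [abs_of_pos (by positivity)]
      rw [div_lt_one (by linarith)]; linarith
    · field_simp
      nlinarith [hdsq]
  · have hμ2 : μ < -2 := by
      have := abs_of_neg (by linarith : μ < 0)
      linarith [hμ, this]
    have hden : μ - d < -2 := by linarith
    refine ⟨2/(μ-d), ?_, ?_, ?_⟩
    · apply div_ne_zero (by norm_num); linarith
    · rw [abs_div, abs_of_pos (by norm_num : (0:ℝ) < 2), abs_of_neg (by linarith : μ - d < 0)]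
      rw [div_lt_one (by linarith)]; linarith
    · have hne : μ - d ≠ 0 := by intro hc; rw [hc] at hden; norm_num at hden
      have heq : (2/(μ-d))^2 - μ*(2/(μ-d)) + 1 = (4 - 2*μ*(μ-d) + (μ-d)^2)/(μ-d)^2 := by
        field_simp
        ring
      rw [heq]
      have : 4 - 2*μ*(μ-d) + (μ-d)^2 = 0 := by nlinarith [hdsq]
      rw [this, zero_div]

lemma hyp {μ r : ℝ} (hr0 : r ≠ 0) (hr1 : |r| < 1) (hroot : r^2 - μ*r + 1 = 0)
    {h : ℕ → ℂ} (hrec : ∀ k, h (k+2) = (μ:ℂ) * h (k+1) - h k)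
    (hlim : Tendsto h atTop (nhds 0)) : h 1 = (r:ℂ) * h 0 := by
  set R : ℝ := r⁻¹ with hR
  have hRr : R ≠ r := by
    intro hcon
    have h1 : r * r = 1 := by
      rw [hR] at hcon
      calc r * r = r⁻¹ * r := by rw [hcon]
        _ = 1 := inv_mul_cancel₀ hr0
    have : |r| * |r| = 1 := by rw [← abs_mul, h1]; simp
    nlinarith [abs_nonneg r, hr1]
  have hRroot : R^2 - μ*R + 1 = 0 := by
    have heq : R^2 - μ*R + 1 = (r^2 - μ*r + 1)/r^2 := by
      rw [hR]; field_simp; ring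
    rw [heq, hroot, zero_div]
  set B : ℂ := (h 1 - (r:ℂ) * h 0)/((R:ℂ) - r) with hB
  set A : ℂ := h 0 - B with hA
  have hRrC : (R:ℂ) - r ≠ 0 := by
    simp only [ne_eq, sub_eq_zero]
    exact_mod_cast fun hh => hRr (by exact_mod_cast hh)
  have hform : ∀ k, h k = A * (r:ℂ)^k + B * (R:ℂ)^k := by
    intro k
    induction k using Nat.twoStepInduction with
    | zero => simp [hA]
    | one =>
      rw [pow_one, pow_one, hA, hB]
      field_simp
      ring
    | more n ih1 ih2 =>
      rw [hrec n, ih1, ih2]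
      have hr2 : (r:ℂ)^2 = (μ:ℂ)*(r:ℂ) - 1 := by
        have : ((r^2 - μ*r + 1 : ℝ) : ℂ) = 0 := by exact_mod_cast hroot
        push_cast at this
        linear_combination this
      have hR2 : (R:ℂ)^2 = (μ:ℂ)*(R:ℂ) - 1 := by
        have : ((R^2 - μ*R + 1 : ℝ) : ℂ) = 0 := by exact_mod_cast hRroot
        push_cast at this
        linear_combination this
      calc (μ:ℂ) * (A * (r:ℂ)^(n+1) + B * (R:ℂ)^(n+1)) - (A * (r:ℂ)^n + B * (R:ℂ)^n)
          = A * (r:ℂ)^n * ((μ:ℂ)*(r:ℂ) - 1) + B * (R:ℂ)^n * ((μ:ℂ)*(R:ℂ) - 1) := by ring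
        _ = A * (r:ℂ)^(n+2) + B * (R:ℂ)^(n+2) := by rw [← hr2, ← hR2]; ring
  have hB0 : B = 0 := by
    by_contra hBne
    have hrlim : Tendsto (fun k => A * (r:ℂ)^k) atTop (nhds 0) := by
      have : Tendsto (fun k => (r:ℂ)^k) atTop (nhds 0) := by
        apply tendsto_pow_atTop_nhds_zero_of_norm_lt_one
        simpa [Complex.norm_real] using hr1
      simpa using this.const_mul A
    have hBlim : Tendsto (fun k => B * (R:ℂ)^k) atTop (nhds 0) := by
      have : (fun k => B * (R:ℂ)^k) = fun k => h k - A * (r:ℂ)^k := by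
        funext k; rw [hform k]; ring
      rw [this]
      simpa using hlim.sub hrlim
    have hRge : 1 ≤ |R| := by
      rw [hR, abs_inv]
      rw [le_inv_comm₀] <;> [skip; norm_num; positivity]
      · simpa using hr1.le
    have hlower : ∀ k, ‖B‖ ≤ ‖B * (R:ℂ)^k‖ := by
      intro k
      rw [norm_mul, norm_pow]
      have : 1 ≤ ‖(R:ℂ)‖ := by simpa [Complex.norm_real] using hRge
      nlinarith [norm_nonneg B, one_le_pow₀ (n := k) this, norm_nonneg ((R:ℂ)^k)]
    have hBpos : 0 < ‖B‖ := norm_pos_iff.mpr hBne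
    have hev : ∀ᶠ k in atTop, ‖B * (R:ℂ)^k‖ < ‖B‖ := by
      have := hBlim.norm
      simp only [norm_zero] at this
      exact this.eventually_lt_const hBpos
    rcases hev.exists with ⟨k, hk⟩
    exact absurd (hlower k) (not_le.mpr hk)
  have h1eq := hform 1
  rw [hB0] at h1eq
  have hAe : A = h 0 := by rw [hA, hB0, sub_zero]
  rw [hAe] at h1eq
  rw [h1eq]; ring


section Orbit

variable (a b : Equiv.Perm I01)

def oA : orbitSet a b half → orbitSet a b half :=
  applyOrbit a b half a (mem_thompson_a a b)

def oA' : orbitSet a b half → orbitSet a b half :=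
  applyOrbit a b half a⁻¹ (inv_mem (mem_thompson_a a b))

def oB : orbitSet a b half → orbitSet a b half :=
  applyOrbit a b half b (mem_thompson_b a b)

def oB' : orbitSet a b half → orbitSet a b half :=
  applyOrbit a b half b⁻¹ (inv_mem (mem_thompson_b a b))

def ov (y : orbitSet a b half) : ℝ := ((y : I01) : ℝ)

variable {a b}

lemma oext {y z : orbitSet a b half} (h : ov a b y = ov a b z) : y = z := by
  apply Subtype.ext
  apply Subtype.ext
  exact h

lemma oA_oA' (y : orbitSet a b half) : oA a b (oA' a b y) = y :=
  Subtype.ext (Equiv.apply_symm_apply a _)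

lemma oA'_oA (y : orbitSet a b half) : oA' a b (oA a b y) = y :=
  Subtype.ext (Equiv.symm_apply_apply a _)

lemma oB_oB' (y : orbitSet a b half) : oB a b (oB' a b y) = y :=
  Subtype.ext (Equiv.apply_symm_apply b _)

lemma oB'_oB (y : orbitSet a b half) : oB' a b (oB a b y) = y :=
  Subtype.ext (Equiv.symm_apply_apply b _)

lemma oA'_of {y z : orbitSet a b half} (h : oA a b z = y) : oA' a b y = z := by
  rw [← h, oA'_oA]

lemma oB'_of {y z : orbitSet a b half} (h : oB a b z = y) : oB' a b y = z := by
  rw [← h, oB'_oB]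

lemma ov_nonneg (y : orbitSet a b half) : 0 ≤ ov a b y := (y : I01).2.1

lemma ov_le_one (y : orbitSet a b half) : ov a b y ≤ 1 := (y : I01).2.2

/-- The two equivs of the orbit induced by `a` and `b`. -/
def eA : orbitSet a b half ≃ orbitSet a b half where
  toFun := oA a b
  invFun := oA' a b
  left_inv := oA'_oA
  right_inv := oA_oA'

def eB : orbitSet a b half ≃ orbitSet a b half where
  toFun := oB a b
  invFun := oB' a b
  left_inv := oB'_oB
  right_inv := oB_oB'

end Orbit

end NoEig

open NoEig in

/-- If `α, β ≠ 0` have the same sign then the operator `H_{α,β,1/2}` on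
`ℓ²(F·(1/2))` has no eigenvalues. -/
theorem no_eigenvalues_sameSign
    (a b : Equiv.Perm I01)
    (ha1 : ∀ x : I01, (x:ℝ) < 1/2 → ((a x : I01) : ℝ) = (x:ℝ)/2)
    (ha2 : ∀ x : I01, 1/2 ≤ (x:ℝ) → (x:ℝ) < 3/4 → ((a x : I01) : ℝ) = (x:ℝ) - 1/4)
    (ha3 : ∀ x : I01, 3/4 ≤ (x:ℝ) → ((a x : I01) : ℝ) = 2*(x:ℝ) - 1)
    (hb1 : ∀ x : I01, (x:ℝ) < 1/2 → ((b x : I01) : ℝ) = (x:ℝ))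
    (hb2 : ∀ x : I01, ∀ hx : 1/2 ≤ (x:ℝ),
      ((b x : I01) : ℝ)
        = ((a ⟨2*(x:ℝ) - 1, Set.mem_Icc.mpr ⟨by linarith, by linarith [x.2.2]⟩⟩ : I01) : ℝ)/2
          + 1/2)
    (α β : ℝ) (hα : α ≠ 0) (hβ : β ≠ 0) (hsign : 0 < α * β)
    (H : OrbitL2 a b half →L[ℂ] OrbitL2 a b half)
    (hH : ∀ (f : OrbitL2 a b half) (y : orbitSet a b half),
      H f y = (α:ℂ) * (f (applyOrbit a b half a (mem_thompson_a a b) y)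
                      + f (applyOrbit a b half a⁻¹ (inv_mem (mem_thompson_a a b)) y))
            + (β:ℂ) * (f (applyOrbit a b half b (mem_thompson_b a b) y)
                      + f (applyOrbit a b half b⁻¹ (inv_mem (mem_thompson_b a b)) y))) :
    ¬ ∃ (lam : ℂ) (f : OrbitL2 a b half), f ≠ 0 ∧ H f = lam • f := by
  rintro ⟨lam, f, hf0, hfe⟩
  -- abbreviations
  set O := orbitSet a b half with hO
  -- pointwise eigenvalue equation
  have hfe' : ∀ y : O, (H f : ∀ _ : O, ℂ) y = lam * f y := by
    intro y
    rw [hfe]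
    have := lp.coeFn_smul lam f
    rw [this]
    simp
  have EQ : ∀ y : O, lam * f y
      = (α:ℂ)*(f (oA a b y) + f (oA' a b y)) + (β:ℂ)*(f (oB a b y) + f (oB' a b y)) := by
    intro y
    rw [← hfe', hH]
    rfl
  -- endpoints are fixed by the group
  have hfix : ∀ g ∈ thompsonSubgroup a b,
      g ⟨(0:ℝ), by norm_num⟩ = ⟨(0:ℝ), by norm_num⟩ ∧
      g ⟨(1:ℝ), by norm_num⟩ = ⟨(1:ℝ), by norm_num⟩ := by
    intro g hg
    induction hg using Subgroup.closure_induction with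
    | mem x hx =>
      rcases hx with hx | hx
      · subst hx
        constructor
        · apply Subtype.ext
          rw [ha1 _ (by norm_num)]
          norm_num
        · apply Subtype.ext
          rw [ha3 _ (by norm_num)]
          norm_num
      · rw [Set.mem_singleton_iff] at hx
        subst hx
        constructor
        · apply Subtype.ext
          rw [hb1 _ (by norm_num)]
        · apply Subtype.ext
          rw [hb2 _ (by norm_num)]
          have h1 : (⟨2*((⟨(1:ℝ), by norm_num⟩ : I01):ℝ) - 1, by norm_num⟩ : I01)
              = ⟨(1:ℝ), by norm_num⟩ := by apply Subtype.ext; norm_num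
          rw [h1, ha3 _ (by norm_num)]
          norm_num
    | one => constructor <;> rfl
    | mul x y hx hy ihx ihy =>
      constructor
      · rw [Equiv.Perm.mul_apply, ihy.1, ihx.1]
      · rw [Equiv.Perm.mul_apply, ihy.2, ihx.2]
    | inv x hx ih =>
      constructor
      · conv_lhs => rw [← ih.1]
        exact Equiv.symm_apply_apply x _
      · conv_lhs => rw [← ih.2]
        exact Equiv.symm_apply_apply x _
  have hov_pos : ∀ y : O, 0 < ov a b y := by
    intro y
    rcases lt_or_eq_of_le (ov_nonneg y) with h | h
    · exact h
    exfalso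
    obtain ⟨g, hgy⟩ := y.2
    have hgy' : (g : Equiv.Perm I01) half = (y : I01) := by
      rw [← hgy]; rfl
    have hy0 : (y : I01) = ⟨(0:ℝ), by norm_num⟩ := by
      apply Subtype.ext; exact h.symm
    have := (hfix g g.2).1
    rw [hy0] at hgy'
    rw [← this] at hgy'
    have : half = (⟨(0:ℝ), by norm_num⟩ : I01) := (g : Equiv.Perm I01).injective hgy'
    have := congrArg Subtype.val this
    norm_num [half] at this
  have hov_lt1 : ∀ y : O, ov a b y < 1 := by
    intro y
    rcases lt_or_eq_of_le (ov_le_one y) with h | h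
    · exact h
    exfalso
    obtain ⟨g, hgy⟩ := y.2
    have hgy' : (g : Equiv.Perm I01) half = (y : I01) := by
      rw [← hgy]; rfl
    have hy0 : (y : I01) = ⟨(1:ℝ), by norm_num⟩ := by
      apply Subtype.ext; exact h
    have := (hfix g g.2).2
    rw [hy0] at hgy'
    rw [← this] at hgy'
    have : half = (⟨(1:ℝ), by norm_num⟩ : I01) := (g : Equiv.Perm I01).injective hgy'
    have := congrArg Subtype.val this
    norm_num [half] at this
  -- value lemmas
  have vA1 : ∀ y : O, ov a b y < 1/2 → ov a b (oA a b y) = ov a b y / 2 :=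
    fun y h => ha1 (y : I01) h
  have vA2 : ∀ y : O, 1/2 ≤ ov a b y → ov a b y < 3/4 → ov a b (oA a b y) = ov a b y - 1/4 :=
    fun y h1 h2 => ha2 (y : I01) h1 h2
  have vA3 : ∀ y : O, 3/4 ≤ ov a b y → ov a b (oA a b y) = 2 * ov a b y - 1 :=
    fun y h => ha3 (y : I01) h
  have vAhalf : ∀ y : O, ov a b y ≤ 1/2 → ov a b (oA a b y) = ov a b y / 2 := by
    intro y h
    rcases lt_or_eq_of_le h with h' | h'
    · exact vA1 y h'
    · rw [vA2 y h'.ge (by linarith)]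
      linarith
  have vB1 : ∀ y : O, ov a b y < 1/2 → ov a b (oB a b y) = ov a b y :=
    fun y h => hb1 (y : I01) h
  have vB2gen : ∀ y : O, ∀ h : 1/2 ≤ ov a b y,
      ov a b (oB a b y)
        = ((a ⟨2*(ov a b y) - 1, Set.mem_Icc.mpr
            ⟨by linarith, by linarith [ov_le_one (a:=a) (b:=b) y]⟩⟩ : I01) : ℝ)/2 + 1/2 :=
    fun y h => hb2 (y : I01) h
  have vB2a : ∀ y : O, 1/2 ≤ ov a b y → ov a b y < 3/4 →
      ov a b (oB a b y) = ov a b y / 2 + 1/4 := by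
    intro y h1 h2
    rw [vB2gen y h1, ha1 _ (by simp only; linarith)]
    simp only
    ring
  have vB2b : ∀ y : O, 3/4 ≤ ov a b y → ov a b y < 7/8 →
      ov a b (oB a b y) = ov a b y - 1/8 := by
    intro y h1 h2
    rw [vB2gen y (by linarith), ha2 _ (by simp only; linarith) (by simp only; linarith)]
    simp only
    ring
  have vB2c : ∀ y : O, 7/8 ≤ ov a b y → ov a b (oB a b y) = 2 * ov a b y - 1 := by
    intro y h1
    rw [vB2gen y (by linarith), ha3 _ (by simp only; linarith)]
    simp only
    ring
  -- values of inverse maps, by case analysis on the preimage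
  have vA'3 : ∀ y : O, 1/2 ≤ ov a b y → ov a b (oA' a b y) = (ov a b y + 1)/2 := by
    intro y h
    set w := oA' a b y with hw
    have hwy : oA a b w = y := oA_oA' y
    rcases lt_or_ge (ov a b w) (1/2) with h1 | h1
    · exfalso
      have := vA1 w h1
      rw [hwy] at this
      linarith
    rcases lt_or_ge (ov a b w) (3/4) with h2 | h2
    · exfalso
      have := vA2 w h1 h2
      rw [hwy] at this
      linarith
    · have := vA3 w h2
      rw [hwy] at this
      linarith
  have vA'1 : ∀ y : O, ov a b y ≤ 1/4 → ov a b (oA' a b y) = 2 * ov a b y := by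
    intro y h
    set w := oA' a b y with hw
    have hwy : oA a b w = y := oA_oA' y
    rcases lt_or_ge (ov a b w) (1/2) with h1 | h1
    · have := vA1 w h1
      rw [hwy] at this
      linarith
    rcases lt_or_ge (ov a b w) (3/4) with h2 | h2
    · have := vA2 w h1 h2
      rw [hwy] at this
      linarith
    · exfalso
      have := vA3 w h2
      rw [hwy] at this
      linarith
  have vA'2 : ∀ y : O, 1/4 ≤ ov a b y → ov a b y < 1/2 →
      ov a b (oA' a b y) = ov a b y + 1/4 := by
    intro y h h'
    set w := oA' a b y with hw
    have hwy : oA a b w = y := oA_oA' y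
    rcases lt_or_ge (ov a b w) (1/2) with h1 | h1
    · exfalso
      have := vA1 w h1
      rw [hwy] at this
      linarith
    rcases lt_or_ge (ov a b w) (3/4) with h2 | h2
    · have := vA2 w h1 h2
      rw [hwy] at this
      linarith
    · exfalso
      have := vA3 w h2
      rw [hwy] at this
      linarith
  have vB'fix : ∀ y : O, ov a b y < 1/2 → oB' a b y = y := by
    intro y h
    exact oB'_of (oext (vB1 y h))
  have vB'cases : ∀ y : O, 1/2 < ov a b y →
      (1/2 ≤ ov a b (oB' a b y) ∧ ov a b (oB' a b y) < 3/4 ∧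
        ov a b y = ov a b (oB' a b y) / 2 + 1/4) ∨
      (3/4 ≤ ov a b (oB' a b y) ∧ ov a b (oB' a b y) < 7/8 ∧
        ov a b y = ov a b (oB' a b y) - 1/8) ∨
      (7/8 ≤ ov a b (oB' a b y) ∧ ov a b y = 2 * ov a b (oB' a b y) - 1) := by
    intro y h
    set w := oB' a b y with hw
    have hwy : oB a b w = y := oB_oB' y
    rcases lt_or_ge (ov a b w) (1/2) with h1 | h1
    · exfalso
      have := vB1 w h1
      rw [hwy] at this
      linarith
    rcases lt_or_ge (ov a b w) (3/4) with h2 | h2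
    · left
      have := vB2a w h1 h2
      rw [hwy] at this
      exact ⟨h1, h2, this⟩
    rcases lt_or_ge (ov a b w) (7/8) with h3 | h3
    · right; left
      have := vB2b w h2 h3
      rw [hwy] at this
      exact ⟨h2, h3, this⟩
    · right; right
      have := vB2c w h3
      rw [hwy] at this
      exact ⟨h3, this⟩
  -- summability and decay of values of f along injective sequences
  have hsq : Summable (fun y : O => ‖f y‖^2) := by
    have h1 := (lp.memℓp f).summable (by norm_num : 0 < (2:ENNReal).toReal)
    have h2 : ∀ y : O, ‖f y‖ ^ (2:ENNReal).toReal = ‖f y‖^2 := by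
      intro y
      rw [show (2:ENNReal).toReal = ((2:ℕ):ℝ) by norm_num, Real.rpow_natCast]
    simpa only [h2] using h1
  have hten : ∀ z : ℕ → O, Function.Injective z →
      Filter.Tendsto (fun k => f (z k)) Filter.atTop (nhds 0) := by
    intro z hz
    have h1 : Summable ((fun y : O => ‖f y‖^2) ∘ z) := hsq.comp_injective hz
    have h2 : Filter.Tendsto (fun k => ‖f (z k)‖^2) Filter.atTop (nhds 0) :=
      h1.tendsto_atTop_zero
    have h3 : Filter.Tendsto (fun k => ‖f (z k)‖) Filter.atTop (nhds 0) := by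
      have h4 := (Real.continuous_sqrt.tendsto 0).comp h2
      simp only [Function.comp_def, Real.sqrt_zero] at h4
      have h5 : ∀ k, Real.sqrt (‖f (z k)‖^2) = ‖f (z k)‖ := fun k =>
        Real.sqrt_sq (norm_nonneg _)
      simpa only [h5] using h4
    exact tendsto_zero_iff_norm_tendsto_zero.mpr h3
  -- injectivity from strictly monotone values
  have hinj_of_mono : ∀ z : ℕ → O, (∀ k, ov a b (z k) < ov a b (z (k+1))) →
      Function.Injective z := by
    intro z hmono
    have : StrictMono (fun k => ov a b (z k)) := strictMono_nat_of_lt_succ hmono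
    intro j k hjk
    exact this.injective (by rw [hjk])
  have hinj_of_anti : ∀ z : ℕ → O, (∀ k, ov a b (z (k+1)) < ov a b (z k)) →
      Function.Injective z := by
    intro z hmono
    have : StrictAnti (fun k => ov a b (z k)) := strictAnti_nat_of_succ_lt hmono
    intro j k hjk
    exact this.injective (by rw [hjk])
  -- positivity of the total square sum
  have hex : ∃ y : O, f y ≠ 0 := by
    by_contra hno
    push_neg at hno
    apply hf0
    apply lp.ext
    funext y
    rw [hno y]
    rfl
  have hT : 0 < ∑' y : O, ‖f y‖^2 := by
    obtain ⟨y0, hy0⟩ := hex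
    have hpos : 0 < ‖f y0‖ := norm_pos_iff.mpr hy0
    exact hsq.tsum_pos (fun y => sq_nonneg _) y0 (by positivity)
  set T : ℝ := ∑' y : O, ‖f y‖^2 with hTdef
  -- products of values along graph equivalences
  have hsqe : ∀ e : (↥O) ≃ (↥O), Summable (fun y : O => ‖f (e y)‖^2) := by
    intro e
    have := hsq.comp_injective e.injective
    simpa [Function.comp_def] using this
  have hTe : ∀ e : (↥O) ≃ (↥O), ∑' y : O, ‖f (e y)‖^2 = T := by
    intro e
    exact e.tsum_eq (fun y => ‖f y‖^2)
  have hprodsum : ∀ e : (↥O) ≃ (↥O), Summable (fun y : O => ‖f y‖ * ‖f (e y)‖) := by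
    intro e
    refine Summable.of_nonneg_of_le (fun y => by positivity)
      (fun y => ?_) (((hsq.add (hsqe e)).div_const 2))
    nlinarith [sq_nonneg (‖f y‖ - ‖f (e y)‖)]
  have hprodle : ∀ e : (↥O) ≃ (↥O), (∑' y : O, ‖f y‖ * ‖f (e y)‖) ≤ T := by
    intro e
    calc ∑' y : O, ‖f y‖ * ‖f (e y)‖
        ≤ ∑' y : O, (‖f y‖^2 + ‖f (e y)‖^2)/2 := by
          refine Summable.tsum_le_tsum (fun y => ?_) (hprodsum e) ((hsq.add (hsqe e)).div_const 2)
          nlinarith [sq_nonneg (‖f y‖ - ‖f (e y)‖)]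
      _ = (T + T)/2 := by rw [tsum_div_const, Summable.tsum_add hsq (hsqe e), hTe e]
      _ = T := by ring
  have hSsum : ∀ e : (↥O) ≃ (↥O), Summable (fun y : O => (starRingEnd ℂ) (f y) * f (e y)) := by
    intro e
    apply Summable.of_norm
    have h1 : ∀ y : O, ‖(starRingEnd ℂ) (f y) * f (e y)‖ = ‖f y‖ * ‖f (e y)‖ := by
      intro y; rw [norm_mul, RCLike.norm_conj]
    simpa only [h1] using hprodsum e
  have hSle : ∀ e : (↥O) ≃ (↥O), ‖∑' y : O, (starRingEnd ℂ) (f y) * f (e y)‖ ≤ T := by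
    intro e
    have h1 : ∀ y : O, ‖(starRingEnd ℂ) (f y) * f (e y)‖ = ‖f y‖ * ‖f (e y)‖ := by
      intro y; rw [norm_mul, RCLike.norm_conj]
    calc ‖∑' y : O, (starRingEnd ℂ) (f y) * f (e y)‖
        ≤ ∑' y : O, ‖(starRingEnd ℂ) (f y) * f (e y)‖ :=
          norm_tsum_le_tsum_norm (by simpa only [h1] using hprodsum e)
      _ = ∑' y : O, ‖f y‖ * ‖f (e y)‖ := tsum_congr h1
      _ ≤ T := hprodle e
  have hSconj : ∀ e : (↥O) ≃ (↥O),
      (starRingEnd ℂ) (∑' y : O, (starRingEnd ℂ) (f y) * f (e y))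
        = ∑' y : O, (starRingEnd ℂ) (f y) * f (e.symm y) := by
    intro e
    have h0 : (starRingEnd ℂ) (∑' y : O, (starRingEnd ℂ) (f y) * f (e y))
        = ∑' y : O, star ((starRingEnd ℂ) (f y) * f (e y)) := tsum_star
    rw [h0]
    have h1 : ∀ y : O, star ((starRingEnd ℂ) (f y) * f (e y))
        = (starRingEnd ℂ) (f (e y)) * f y := by
      intro y
      rw [star_mul']
      have : star ((starRingEnd ℂ) (f y)) = f y := by
        simp
      rw [this]
      rw [mul_comm]
      rfl
    rw [tsum_congr h1]
    have h2 := e.tsum_eq (fun z => (starRingEnd ℂ) (f z) * f (e.symm z))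
    simp only [Equiv.symm_apply_apply] at h2
    exact h2
  -- the four pairing sums
  set SA : ℂ := ∑' y : O, (starRingEnd ℂ) (f y) * f (oA a b y) with hSAdef
  set SA' : ℂ := ∑' y : O, (starRingEnd ℂ) (f y) * f (oA' a b y) with hSA'def
  set SB : ℂ := ∑' y : O, (starRingEnd ℂ) (f y) * f (oB a b y) with hSBdef
  set SB' : ℂ := ∑' y : O, (starRingEnd ℂ) (f y) * f (oB' a b y) with hSB'def
  have heA : ∀ y : O, (eA (a := a) (b := b)) y = oA a b y := fun _ => rfl
  have heA' : ∀ y : O, (eA (a := a) (b := b)).symm y = oA' a b y := fun _ => rfl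
  have heB : ∀ y : O, (eB (a := a) (b := b)) y = oB a b y := fun _ => rfl
  have heB' : ∀ y : O, (eB (a := a) (b := b)).symm y = oB' a b y := fun _ => rfl
  have hSAsum : Summable (fun y : O => (starRingEnd ℂ) (f y) * f (oA a b y)) := by
    simpa only [heA] using hSsum (eA (a := a) (b := b))
  have hSA'sum : Summable (fun y : O => (starRingEnd ℂ) (f y) * f (oA' a b y)) := by
    simpa only [heA'] using hSsum (eA (a := a) (b := b)).symm
  have hSBsum : Summable (fun y : O => (starRingEnd ℂ) (f y) * f (oB a b y)) := by
    simpa only [heB] using hSsum (eB (a := a) (b := b))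
  have hSB'sum : Summable (fun y : O => (starRingEnd ℂ) (f y) * f (oB' a b y)) := by
    simpa only [heB'] using hSsum (eB (a := a) (b := b)).symm
  -- main pairing identity
  have hmain : lam * (T:ℂ) = (α:ℂ)*(SA + SA') + (β:ℂ)*(SB + SB') := by
    have hleft : ∑' y : O, (starRingEnd ℂ) (f y) * (lam * f y) = lam * (T:ℂ) := by
      have h1 : ∀ y : O, (starRingEnd ℂ) (f y) * (lam * f y) = lam * ((‖f y‖^2 : ℝ) : ℂ) := by
        intro y
        have h2 : (starRingEnd ℂ) (f y) * (lam * f y) = lam * ((f y) * (starRingEnd ℂ) (f y)) := by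
          ring
        rw [h2, Complex.mul_conj]
        congr 1
        rw [Complex.normSq_eq_norm_sq]
      rw [tsum_congr h1, tsum_mul_left, ← Complex.ofReal_tsum, ← hTdef]
    have hright : ∑' y : O, (starRingEnd ℂ) (f y) * (lam * f y)
        = (α:ℂ)*(SA + SA') + (β:ℂ)*(SB + SB') := by
      have h1 : ∀ y : O, (starRingEnd ℂ) (f y) * (lam * f y)
          = (α:ℂ)*((starRingEnd ℂ) (f y) * f (oA a b y) + (starRingEnd ℂ) (f y) * f (oA' a b y))
          + (β:ℂ)*((starRingEnd ℂ) (f y) * f (oB a b y) + (starRingEnd ℂ) (f y) * f (oB' a b y)) := by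
        intro y
        rw [EQ y]
        ring
      rw [tsum_congr h1,
        Summable.tsum_add (((hSAsum.add hSA'sum).mul_left _)) (((hSBsum.add hSB'sum).mul_left _)),
        tsum_mul_left, tsum_mul_left, Summable.tsum_add hSAsum hSA'sum, Summable.tsum_add hSBsum hSB'sum,
        ← hSAdef, ← hSA'def, ← hSBdef, ← hSB'def]
    rw [← hleft, hright]
  -- conjugation symmetry of the pairing sums
  have hconjA : (starRingEnd ℂ) SA = SA' := by
    have := hSconj (eA (a := a) (b := b))
    simpa only [heA, heA', hSAdef, hSA'def] using this
  have hconjA' : (starRingEnd ℂ) SA' = SA := by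
    rw [← hconjA]
    exact Complex.conj_conj SA
  have hconjB : (starRingEnd ℂ) SB = SB' := by
    have := hSconj (eB (a := a) (b := b))
    simpa only [heB, heB', hSBdef, hSB'def] using this
  have hconjB' : (starRingEnd ℂ) SB' = SB := by
    rw [← hconjB]
    exact Complex.conj_conj SB
  -- lam is real
  have hTC : ((T:ℝ):ℂ) ≠ 0 := Complex.ofReal_ne_zero.mpr hT.ne'
  have hlamconj : (starRingEnd ℂ) lam = lam := by
    have hc : (starRingEnd ℂ) (lam * (T:ℂ)) = lam * (T:ℂ) := by
      rw [hmain]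
      rw [map_add, map_mul, map_mul, map_add, map_add, hconjA, hconjA', hconjB, hconjB',
        Complex.conj_ofReal, Complex.conj_ofReal]
      ring
    rw [map_mul, Complex.conj_ofReal] at hc
    exact mul_right_cancel₀ hTC hc
  have hlamre : ((lam.re : ℝ) : ℂ) = lam := Complex.conj_eq_iff_re.mp hlamconj
  set lamR : ℝ := lam.re with hlamRdef
  -- sign analysis
  have hsigns : (0 < α ∧ 0 < β) ∨ (α < 0 ∧ β < 0) := by
    rcases lt_trichotomy α 0 with h | h | h
    · right
      refine ⟨h, ?_⟩
      by_contra hb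
      push_neg at hb
      nlinarith
    · exact absurd h hα
    · left
      refine ⟨h, ?_⟩
      by_contra hb
      push_neg at hb
      nlinarith
  have habne : α + β ≠ 0 := by
    rcases hsigns with ⟨h1, h2⟩ | ⟨h1, h2⟩ <;> intro hc <;> linarith
  have habs_add : |α + β| = |α| + |β| := by
    rcases hsigns with ⟨h1, h2⟩ | ⟨h1, h2⟩
    · rw [abs_of_pos (by linarith), abs_of_pos h1, abs_of_pos h2]
    · rw [abs_of_neg (by linarith), abs_of_neg h1, abs_of_neg h2]
      ring
  -- eigenvalue bound
  have hlam_bound : |lamR| ≤ 2*(|α| + |β|) := by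
    have h1 : ‖lam * (T:ℂ)‖ = |lamR| * T := by
      rw [norm_mul, Complex.norm_real, Real.norm_eq_abs, abs_of_pos hT, ← hlamre,
        Complex.norm_real, Real.norm_eq_abs]
    have h2 : ‖lam * (T:ℂ)‖ ≤ 2*(|α| + |β|)*T := by
      rw [hmain]
      have hSAle : ‖SA‖ ≤ T := by
        rw [hSAdef]
        simpa only [heA] using hSle (eA (a := a) (b := b))
      have hSA'le : ‖SA'‖ ≤ T := by
        rw [hSA'def]
        simpa only [heA'] using hSle (eA (a := a) (b := b)).symm
      have hSBle : ‖SB‖ ≤ T := by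
        rw [hSBdef]
        simpa only [heB] using hSle (eB (a := a) (b := b))
      have hSB'le : ‖SB'‖ ≤ T := by
        rw [hSB'def]
        simpa only [heB'] using hSle (eB (a := a) (b := b)).symm
      have h3 : ‖(α:ℂ)*(SA + SA')‖ ≤ |α| * (T + T) := by
        rw [norm_mul, Complex.norm_real, Real.norm_eq_abs]
        have h4 : ‖SA + SA'‖ ≤ T + T :=
          le_trans (norm_add_le _ _) (by linarith [hSAle, hSA'le])
        exact mul_le_mul_of_nonneg_left h4 (abs_nonneg α)
      have h5 : ‖(β:ℂ)*(SB + SB')‖ ≤ |β| * (T + T) := by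
        rw [norm_mul, Complex.norm_real, Real.norm_eq_abs]
        have h6 : ‖SB + SB'‖ ≤ T + T :=
          le_trans (norm_add_le _ _) (by linarith [hSBle, hSB'le])
        exact mul_le_mul_of_nonneg_left h6 (abs_nonneg β)
      calc ‖(α:ℂ)*(SA + SA') + (β:ℂ)*(SB + SB')‖
          ≤ ‖(α:ℂ)*(SA + SA')‖ + ‖(β:ℂ)*(SB + SB')‖ := norm_add_le _ _
        _ ≤ |α| * (T + T) + |β| * (T + T) := add_le_add h3 h5
        _ = 2*(|α| + |β|)*T := by ring
    rw [h1] at h2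
    exact le_of_mul_le_mul_right h2 hT
  set μR : ℝ := lamR / (α + β) with hμRdef
  have hμR2 : |μR| ≤ 2 := by
    rw [hμRdef, abs_div, habs_add, div_le_iff₀ (by rw [← habs_add]; exact abs_pos.mpr habne)]
    rw [← habs_add] at hlam_bound ⊢
    linarith
  have hlamRμ : lamR = (α + β) * μR := by
    rw [hμRdef]
    field_simp
  set μL : ℝ := (lamR - 2*β)/α with hμLdef
  have hlamRL : lamR = α * μL + 2*β := by
    rw [hμLdef]
    field_simp
    ring
  have hlamCR : lam = ((α:ℂ) + β) * (μR:ℂ) := by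
    rw [← hlamre, hlamRμ]
    push_cast
    ring
  have hlamCL : lam = (α:ℂ) * (μL:ℂ) + 2*(β:ℂ) := by
    rw [← hlamre, hlamRL]
    push_cast
    ring
  have habC : ((α:ℂ) + β) ≠ 0 := by
    have : (((α + β : ℝ)):ℂ) ≠ 0 := Complex.ofReal_ne_zero.mpr habne
    push_cast at this
    exact this
  have hαC : (α:ℂ) ≠ 0 := Complex.ofReal_ne_zero.mpr hα
  have hβC : (β:ℂ) ≠ 0 := Complex.ofReal_ne_zero.mpr hβ
  -- STEP 1: f vanishes on [3/4, 1)
  have hRZ : ∀ y : O, 3/4 ≤ ov a b y → f y = 0 := by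
    intro y hy
    set z : ℕ → O := fun k => (oA' a b)^[k] y with hzdef
    have hzsucc : ∀ k, z (k+1) = oA' a b (z k) := by
      intro k
      rw [hzdef]
      exact Function.iterate_succ_apply' _ _ _
    have hge : ∀ k, 3/4 ≤ ov a b (z k) := by
      intro k
      induction k with
      | zero => exact hy
      | succ n ih =>
        rw [hzsucc n, vA'3 _ (by linarith)]
        linarith
    have hval : ∀ k, ov a b (z (k+1)) = (ov a b (z k) + 1)/2 := by
      intro k
      rw [hzsucc k]
      exact vA'3 _ (by linarith [hge k])
    have h78 : ∀ k, 7/8 ≤ ov a b (z (k+1)) := by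
      intro k
      rw [hval k]
      linarith [hge k]
    have hmono : ∀ k, ov a b (z k) < ov a b (z (k+1)) := by
      intro k
      rw [hval k]
      linarith [hov_lt1 (z k)]
    have hA : ∀ k, oA a b (z (k+1)) = z k := by
      intro k
      rw [hzsucc k]
      exact oA_oA' _
    have hA' : ∀ k, oA' a b (z (k+1)) = z (k+2) := by
      intro k
      rw [hzsucc (k+1)]
    have hBeq : ∀ k, oB a b (z (k+1)) = z k := by
      intro k
      apply oext
      rw [vB2c _ (h78 k), hval k]
      ring
    have hB' : ∀ k, oB' a b (z (k+1)) = z (k+2) := by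
      intro k
      apply oB'_of
      apply oext
      rw [vB2c _ (h78 (k+1)), hval (k+1)]
      ring
    have hrec : ∀ k, f (z (k+2)) = (μR:ℂ) * f (z (k+1)) - f (z k) := by
      intro k
      have heq := EQ (z (k+1))
      rw [hA k, hA' k, hBeq k, hB' k, hlamCR] at heq
      have h2 : ((α:ℂ)+β) * (μR * f (z (k+1))) = ((α:ℂ)+β) * (f (z k) + f (z (k+2))) := by
        calc ((α:ℂ)+β) * (μR * f (z (k+1))) = ((α:ℂ)+β) * (μR:ℂ) * f (z (k+1)) := by ring
          _ = (α:ℂ) * (f (z k) + f (z (k+2))) + (β:ℂ) * (f (z k) + f (z (k+2))) := heq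
          _ = ((α:ℂ)+β) * (f (z k) + f (z (k+2))) := by ring
      have h3 := mul_left_cancel₀ habC h2
      linear_combination -h3
    have hlim := hten z (hinj_of_mono z hmono)
    exact elliptic hμR2 hrec hlim
  -- left-ray recurrences
  have hLray : ∀ y : O, ov a b y ≤ 1/2 →
      (∀ k, f ((oA a b)^[k+2] y) = (μL:ℂ) * f ((oA a b)^[k+1] y) - f ((oA a b)^[k] y))
      ∧ Filter.Tendsto (fun k => f ((oA a b)^[k] y)) Filter.atTop (nhds 0) := by
    intro y hy
    set w : ℕ → O := fun k => (oA a b)^[k] y with hwdef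
    have hwsucc : ∀ k, w (k+1) = oA a b (w k) := by
      intro k
      rw [hwdef]
      exact Function.iterate_succ_apply' _ _ _
    have hwv : ∀ k, ov a b (w k) = ov a b y / 2^k := by
      intro k
      induction k with
      | zero => simp [hwdef]
      | succ n ih =>
        have hle : ov a b (w n) ≤ 1/2 := by
          rw [ih]
          have h1 : (0:ℝ) < 2^n := by positivity
          have h2 : (1:ℝ) ≤ (2:ℝ)^n := one_le_pow₀ (by norm_num : (1:ℝ) ≤ 2)
          rw [div_le_iff₀ h1]
          nlinarith
        rw [hwsucc n, vAhalf _ hle, ih]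
        ring
    have hwhalf : ∀ k, ov a b (w (k+1)) ≤ 1/4 := by
      intro k
      rw [hwv (k+1)]
      have h2 : (1:ℝ) ≤ (2:ℝ)^k := one_le_pow₀ (by norm_num : (1:ℝ) ≤ 2)
      have h1 : (2:ℝ) ≤ (2:ℝ)^(k+1) := by
        rw [pow_succ]
        nlinarith
      rw [div_le_iff₀ (by positivity)]
      nlinarith
    have hA : ∀ k, oA a b (w (k+1)) = w (k+2) := by
      intro k
      rw [hwsucc (k+1)]
    have hA' : ∀ k, oA' a b (w (k+1)) = w k := by
      intro k
      exact oA'_of (hwsucc k).symm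
    have hBeq : ∀ k, oB a b (w (k+1)) = w (k+1) := by
      intro k
      exact oext (vB1 _ (by linarith [hwhalf k]))
    have hB' : ∀ k, oB' a b (w (k+1)) = w (k+1) := by
      intro k
      exact vB'fix _ (by linarith [hwhalf k])
    have hmono : ∀ k, ov a b (w (k+1)) < ov a b (w k) := by
      intro k
      rw [hwv k, hwv (k+1)]
      have h1 : (0:ℝ) < 2^k := by positivity
      have h2 : (0:ℝ) < ov a b y := hov_pos y
      rw [pow_succ]
      rw [div_lt_div_iff₀ (by positivity) h1]
      nlinarith
    constructor
    · intro k
      have heq := EQ (w (k+1))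
      rw [hA k, hA' k, hBeq k, hB' k, hlamCL] at heq
      have h2 : (α:ℂ) * ((μL:ℂ) * f (w (k+1))) = (α:ℂ) * (f (w (k+2)) + f (w k)) := by
        linear_combination heq
      have h3 := mul_left_cancel₀ hαC h2
      linear_combination -h3
    · exact hten w (hinj_of_anti w hmono)
  have hfinish : (∀ y : O, f y = 0) → False := by
    intro hall
    apply hf0
    apply lp.ext
    funext y
    rw [hall y]
    rfl
  rcases le_or_gt |μL| 2 with hμLe | hμLh
  · -- CASE 1 : the left parameter is elliptic
    have hL0 : ∀ y : O, ov a b y ≤ 1/2 → f y = 0 := by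
      intro y hy
      obtain ⟨hrec, hlim⟩ := hLray y hy
      exact elliptic hμLe hrec hlim
    have hS0 : ∀ s : O, 1/2 ≤ ov a b s → ov a b s < 3/4 → f s = 0 := by
      intro s h1 h2
      set t := oA a b s with htdef
      have htv : ov a b t = ov a b s - 1/4 := vA2 s h1 h2
      have ht2 : ov a b t ≤ 1/2 := by linarith
      have htlt : ov a b t < 1/2 := by linarith
      have hoAt : ov a b (oA a b t) ≤ 1/2 := by
        rw [vAhalf t ht2]
        linarith
      have hA's : oA' a b t = s := oA'_of htdef.symm
      have hBt : oB a b t = t := oext (vB1 t htlt)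
      have hB't : oB' a b t = t := vB'fix t htlt
      have heq := EQ t
      rw [hBt, hB't, hA's, hL0 t ht2, hL0 (oA a b t) hoAt] at heq
      have h3 : (α:ℂ) * f s = 0 := by linear_combination -heq
      exact (mul_eq_zero.mp h3).resolve_left hαC
    exact hfinish (fun y => by
      rcases le_or_gt (ov a b y) (1/2) with h | h
      · exact hL0 y h
      · rcases lt_or_ge (ov a b y) (3/4) with h2 | h2
        · exact hS0 y h.le h2
        · exact hRZ y h2)
  · -- CASE 2 : the left parameter is hyperbolic
    obtain ⟨r, hr0, hr1, hroot⟩ := hyp_root hμLh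
    have hμLrr : (μL - r) * r = 1 := by linear_combination -hroot
    have hμLrrC : (((μL:ℝ):ℂ) - (r:ℝ)) * ((r:ℝ):ℂ) = 1 := by exact_mod_cast hμLrr
    -- ray relation on the lower half
    have hRel : ∀ y : O, ov a b y ≤ 1/2 → f (oA a b y) = (r:ℂ) * f y := by
      intro y hy
      obtain ⟨hrec, hlim⟩ := hLray y hy
      exact hyp hr0 hr1 hroot hrec hlim
    -- top relation on [1/2, 3/4]
    have hTop : ∀ s : O, 1/2 ≤ ov a b s → ov a b s ≤ 3/4 → f (oA a b s) = (r:ℂ) * f s := by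
      intro s h1 h2
      rcases lt_or_eq_of_le h2 with h2' | h2'
      · set t := oA a b s with htdef
        have htv : ov a b t = ov a b s - 1/4 := vA2 s h1 h2'
        have ht2 : ov a b t ≤ 1/2 := by linarith
        have htlt : ov a b t < 1/2 := by linarith
        have hA's : oA' a b t = s := oA'_of htdef.symm
        have hBt : oB a b t = t := oext (vB1 t htlt)
        have hB't : oB' a b t = t := vB'fix t htlt
        have heq := EQ t
        rw [hBt, hB't, hA's, hRel t ht2, hlamCL] at heq
        have h4 : (α:ℂ) * (((μL:ℝ):ℂ) - (r:ℝ)) * f t = (α:ℂ) * f s := by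
          linear_combination heq
        have h7 : (α:ℂ) * (((μL:ℝ):ℂ) - (r:ℝ)) * f t * ((r:ℝ):ℂ)
            = (α:ℂ) * f s * ((r:ℝ):ℂ) := by rw [h4]
        have h8 : (α:ℂ) * f t = (α:ℂ) * (((r:ℝ):ℂ) * f s) := by
          linear_combination h7 - (α:ℂ) * f t * hμLrrC
        exact mul_left_cancel₀ hαC h8
      · set t := oA a b s with htdef
        have htv : ov a b t = 1/2 := by
          rw [vA3 s (by linarith), h2']
          norm_num
        have ht2 : ov a b t ≤ 1/2 := htv.le
        have hA's : oA' a b t = s := oA'_of htdef.symm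
        have hBt : oB a b t = t := by
          apply oext
          rw [vB2a t htv.ge (by linarith), htv]
          norm_num
        have hB't : oB' a b t = t := oB'_of hBt
        have heq := EQ t
        rw [hBt, hB't, hA's, hRel t ht2, hlamCL] at heq
        have h4 : (α:ℂ) * (((μL:ℝ):ℂ) - (r:ℝ)) * f t = (α:ℂ) * f s := by
          linear_combination heq
        have h7 : (α:ℂ) * (((μL:ℝ):ℂ) - (r:ℝ)) * f t * ((r:ℝ):ℂ)
            = (α:ℂ) * f s * ((r:ℝ):ℂ) := by rw [h4]
        have h8 : (α:ℂ) * f t = (α:ℂ) * (((r:ℝ):ℂ) * f s) := by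
          linear_combination h7 - (α:ℂ) * f t * hμLrrC
        exact mul_left_cancel₀ hαC h8
    -- the middle parameter
    set μ2 : ℝ := (lamR - α*r)/β with hμ2def
    have hlamCL2 : lam = (α:ℂ)*((r:ℝ):ℂ) + (β:ℂ)*((μ2:ℝ):ℂ) := by
      have hreal : lamR = α*r + β*μ2 := by
        rw [hμ2def]
        field_simp
        ring
      rw [← hlamre, hreal]
      push_cast
      ring
    -- middle rays (b-rays inside (1/2, 3/4))
    have hMray : ∀ s : O, 1/2 < ov a b s → ov a b s < 3/4 →
        (∀ k, f ((oB a b)^[k+2] s) = ((μ2:ℝ):ℂ) * f ((oB a b)^[k+1] s) - f ((oB a b)^[k] s))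
        ∧ Filter.Tendsto (fun k => f ((oB a b)^[k] s)) Filter.atTop (nhds 0) := by
      intro s h1 h2
      set m : ℕ → O := fun k => (oB a b)^[k] s with hmdef
      have hmsucc : ∀ k, m (k+1) = oB a b (m k) := by
        intro k
        rw [hmdef]
        exact Function.iterate_succ_apply' _ _ _
      have hmb : ∀ k, 1/2 < ov a b (m k) ∧ ov a b (m k) < 3/4 := by
        intro k
        induction k with
        | zero => exact ⟨h1, h2⟩
        | succ n ih =>
          rw [hmsucc n, vB2a _ ih.1.le ih.2]
          constructor
          · linarith [ih.1]
          · linarith [ih.2]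
      have hmval : ∀ k, ov a b (m (k+1)) = ov a b (m k)/2 + 1/4 := by
        intro k
        rw [hmsucc k]
        exact vB2a _ (hmb k).1.le (hmb k).2
      have hanti : ∀ k, ov a b (m (k+1)) < ov a b (m k) := by
        intro k
        rw [hmval k]
        linarith [(hmb k).1]
      have hBm : ∀ k, oB a b (m (k+1)) = m (k+2) := by
        intro k
        rw [hmsucc (k+1)]
      have hB'm : ∀ k, oB' a b (m (k+1)) = m k := by
        intro k
        exact oB'_of (hmsucc k).symm
      have hAm : ∀ k, f (oA a b (m (k+1))) = (r:ℂ) * f (m (k+1)) := by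
        intro k
        exact hTop _ (hmb (k+1)).1.le (hmb (k+1)).2.le
      have hA'm : ∀ k, f (oA' a b (m (k+1))) = 0 := by
        intro k
        apply hRZ
        rw [vA'3 _ (hmb (k+1)).1.le]
        linarith [(hmb (k+1)).1]
      constructor
      · intro k
        have heq := EQ (m (k+1))
        rw [hBm k, hB'm k, hAm k, hA'm k, hlamCL2] at heq
        have h3 : (β:ℂ) * (((μ2:ℝ):ℂ) * f (m (k+1))) = (β:ℂ) * (f (m (k+2)) + f (m k)) := by
          linear_combination heq
        have h4 := mul_left_cancel₀ hβC h3
        linear_combination -h4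
      · exact hten m (hinj_of_anti m hanti)
    -- f vanishes on (1/2, 3/4)
    have hMid0 : ∀ s : O, 1/2 < ov a b s → ov a b s < 3/4 → f s = 0 := by
      rcases le_or_gt |μ2| 2 with hμ2e | hμ2h
      · intro s h1 h2
        obtain ⟨hrec, hlim⟩ := hMray s h1 h2
        exact elliptic hμ2e hrec hlim
      · obtain ⟨r2, hr20, hr21, hroot2⟩ := hyp_root hμ2h
        have hμ2rr : (μ2 - r2) * r2 = 1 := by linear_combination -hroot2
        have hμ2rrC : (((μ2:ℝ):ℂ) - (r2:ℝ)) * ((r2:ℝ):ℂ) = 1 := by exact_mod_cast hμ2rr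
        have hRel2 : ∀ s : O, 1/2 < ov a b s → ov a b s < 3/4 →
            f (oB a b s) = ((r2:ℝ):ℂ) * f s := by
          intro s h1 h2
          obtain ⟨hrec, hlim⟩ := hMray s h1 h2
          exact hyp hr20 hr21 hroot2 hrec hlim
        have hTops0 : ∀ s : O, 5/8 ≤ ov a b s → ov a b s < 3/4 → f s = 0 := by
          intro s h1 h2
          have hA's : f (oA' a b s) = 0 := by
            apply hRZ
            rw [vA'3 s (by linarith)]
            linarith
          have hB's : f (oB' a b s) = 0 := by
            rcases vB'cases s (by linarith) with ⟨hw1, hw2, hv⟩ | ⟨hw1, hw2, hv⟩ | ⟨hw1, hv⟩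
            · linarith
            · exact hRZ _ hw1
            · exact hRZ _ (by linarith)
          have heq := EQ s
          rw [hA's, hB's, hTop s (by linarith) (by linarith),
            hRel2 s (by linarith) h2, hlamCL2] at heq
          have h3 : (β:ℂ) * ((((μ2:ℝ):ℂ) - (r2:ℝ)) * f s) = 0 := by
            linear_combination heq
          have h4 := (mul_eq_zero.mp h3).resolve_left hβC
          have h5 : (((μ2:ℝ):ℂ) - (r2:ℝ)) ≠ 0 := by
            intro hc
            rw [hc, zero_mul] at hμ2rrC
            exact zero_ne_one hμ2rrC
          exact (mul_eq_zero.mp h4).resolve_left h5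
        have hstep : ∀ s : O, 1/2 < ov a b s → ov a b s < 5/8 →
            f s = ((r2:ℝ):ℂ) * f (oB' a b s) ∧ ov a b (oB' a b s) = 2*ov a b s - 1/2 := by
          intro s h1 h2
          rcases vB'cases s h1 with ⟨hw1, hw2, hv⟩ | ⟨hw1, hw2, hv⟩ | ⟨hw1, hv⟩
          · have hwv : ov a b (oB' a b s) = 2*ov a b s - 1/2 := by linarith
            have hwlt : 1/2 < ov a b (oB' a b s) := by linarith
            have hfw := hRel2 (oB' a b s) hwlt (by linarith)
            rw [oB_oB'] at hfw
            exact ⟨hfw, hwv⟩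
          · linarith
          · linarith
        have hind : ∀ n : ℕ, ∀ s : O, 1/2 + (1/2)^(n+3) ≤ ov a b s → ov a b s < 3/4 →
            f s = 0 := by
          intro n
          induction n with
          | zero =>
            intro s hs1 hs2
            apply hTops0 s (by norm_num at hs1 ⊢; linarith) hs2
          | succ n ih =>
            intro s hs1 hs2
            rcases le_or_gt (5/8) (ov a b s) with h5 | h5
            · exact hTops0 s h5 hs2
            · have hpow : (0:ℝ) < (1/2)^(n+4) := by positivity
              obtain ⟨hfs, hw⟩ := hstep s (by
                calc (1/2:ℝ) < 1/2 + (1/2)^(n+4) := by linarith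
                _ ≤ ov a b s := by
                    have : ((1:ℝ)/2)^(n+1+3) = (1/2)^(n+4) := by ring_nf
                    rw [this] at hs1
                    exact hs1) h5
              rw [hfs, ih (oB' a b s) (by
                rw [hw]
                have h6 : ((1:ℝ)/2)^(n+1+3) = (1/2)^(n+3) * (1/2) := by ring
                rw [h6] at hs1
                linarith) (by rw [hw]; linarith), mul_zero]
        intro s h1 h2
        obtain ⟨n, hn⟩ := exists_pow_lt_of_lt_one
          (x := ov a b s - 1/2) (by linarith) (by norm_num : (1/2:ℝ) < 1)
        apply hind n s ?_ h2
        have h7 : ((1:ℝ)/2)^(n+3) ≤ (1/2)^n := by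
          apply pow_le_pow_of_le_one (by norm_num) (by norm_num)
          omega
        linarith
    -- f vanishes at 1/2
    have hhalfpt : ∀ s : O, ov a b s = 1/2 → f s = 0 := by
      intro s hs
      have hA's : f (oA' a b s) = 0 := by
        apply hRZ
        rw [vA'3 s hs.ge]
        linarith [hs]
      have hBs : oB a b s = s := by
        apply oext
        rw [vB2a s hs.ge (by rw [hs]; norm_num), hs]
        norm_num
      have hB's : oB' a b s = s := oB'_of hBs
      have heq := EQ s
      rw [hA's, hBs, hB's, hRel s hs.le, hlamCL] at heq
      have h3 : (α:ℂ) * ((((μL:ℝ):ℂ) - (r:ℝ)) * f s) = 0 := by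
        linear_combination heq
      have h4 := (mul_eq_zero.mp h3).resolve_left hαC
      have h5 : (((μL:ℝ):ℂ) - (r:ℝ)) ≠ 0 := by
        intro hc
        rw [hc, zero_mul] at hμLrrC
        exact zero_ne_one hμLrrC
      exact (mul_eq_zero.mp h4).resolve_left h5
    -- f vanishes on (0, 1/2)
    have hup : ∀ y : O, ov a b y < 1/2 → f y = (r:ℂ) * f (oA' a b y) := by
      intro y h
      rcases lt_or_ge (ov a b y) (1/4) with h1 | h1
      · have hv : ov a b (oA' a b y) = 2 * ov a b y := vA'1 y h1.le
        have := hRel (oA' a b y) (by rw [hv]; linarith)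
        rwa [oA_oA'] at this
      · have hv : ov a b (oA' a b y) = ov a b y + 1/4 := vA'2 y h1 h
        have := hTop (oA' a b y) (by rw [hv]; linarith) (by rw [hv]; linarith)
        rwa [oA_oA'] at this
    have hLow0 : ∀ y : O, ov a b y < 1/2 → f y = 0 := by
      have hind : ∀ n : ℕ, ∀ y : O, (1/2)^(n+2) ≤ ov a b y → ov a b y < 1/2 → f y = 0 := by
        intro n
        induction n with
        | zero =>
          intro y h1 h2
          norm_num at h1
          have hv : ov a b (oA' a b y) = ov a b y + 1/4 := vA'2 y h1 h2
          have hf' : f (oA' a b y) = 0 := by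
            rcases lt_or_eq_of_le (by rw [hv]; linarith : 1/2 ≤ ov a b (oA' a b y)) with hc | hc
            · exact hMid0 _ hc (by rw [hv]; linarith)
            · exact hhalfpt _ hc.symm
          rw [hup y h2, hf', mul_zero]
        | succ n ih =>
          intro y h1 h2
          rcases le_or_gt (1/4) (ov a b y) with h3 | h3
          · have hv : ov a b (oA' a b y) = ov a b y + 1/4 := vA'2 y h3 h2
            have hf' : f (oA' a b y) = 0 := by
              rcases lt_or_eq_of_le (by rw [hv]; linarith : 1/2 ≤ ov a b (oA' a b y)) with hc | hc
              · exact hMid0 _ hc (by rw [hv]; linarith)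
              · exact hhalfpt _ hc.symm
            rw [hup y h2, hf', mul_zero]
          · have hv : ov a b (oA' a b y) = 2 * ov a b y := vA'1 y h3.le
            have hf' : f (oA' a b y) = 0 := by
              apply ih (oA' a b y) ?_ (by rw [hv]; linarith)
              rw [hv]
              have h6 : ((1:ℝ)/2)^(n+1+2) = (1/2)^(n+2) * (1/2) := by ring
              rw [h6] at h1
              linarith
            rw [hup y h2, hf', mul_zero]
      intro y h
      obtain ⟨n, hn⟩ := exists_pow_lt_of_lt_one
        (x := ov a b y) (hov_pos y) (by norm_num : (1/2:ℝ) < 1)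
      apply hind n y ?_ h
      have h7 : ((1:ℝ)/2)^(n+2) ≤ (1/2)^n := by
        apply pow_le_pow_of_le_one (by norm_num) (by norm_num)
        omega
      linarith
    exact hfinish (fun y => by
      rcases lt_or_ge (ov a b y) (1/2) with h | h
      · exact hLow0 y h
      · rcases lt_or_eq_of_le h with h' | h'
        · rcases lt_or_ge (ov a b y) (3/4) with h2 | h2
          · exact hMid0 y h' h2
          · exact hRZ y h2
        · exact hhalfpt y h'.symm)







end
end

section
/- Let U ⊆ ℂ be a nonempty open connected set, let p₁, …, p_n be complex polynomials in one variable, and let s₁, …, s_n be analytic functions on U with s_j(z)² = p_j(z) for all z ∈ U and each j = 1, …, n. Let R be a complex polynomial in n+1 variables. Then either R(z, s₁(z), …, s_n(z)) = 0 for every z ∈ U, or the set {z ∈ U : R(z, s₁(z), …, s_n(z)) = 0} is finite. -/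
noncomputable section
open MvPolynomial

lemma diffOn_eval {U : Set ℂ} {m : ℕ} (w : Fin m → ℂ → ℂ)
    (hw : ∀ i, DifferentiableOn ℂ (w i) U) (R : MvPolynomial (Fin m) ℂ) :
    DifferentiableOn ℂ (fun z => MvPolynomial.eval (fun i => w i z) R) U := by
  induction R using MvPolynomial.induction_on with
  | C a => simpa using differentiableOn_const a
  | add p q hp hq => simp only [map_add]; exact hp.add hq
  | mul_X p i hp => simp only [map_mul, MvPolynomial.eval_X]; exact hp.mul (hw i)

lemma eqOn_zero_or_eqOn_zero {U : Set ℂ} (hUopen : IsOpen U) (hUconn : IsPreconnected U)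
    {f g : ℂ → ℂ} (hf : DifferentiableOn ℂ f U) (hg : DifferentiableOn ℂ g U)
    (h : ∀ z ∈ U, f z * g z = 0) :
    (∀ z ∈ U, f z = 0) ∨ (∀ z ∈ U, g z = 0) := by
  by_contra hcon
  push_neg at hcon
  obtain ⟨⟨z₁, hz₁, hfz₁⟩, ⟨z₂, hz₂, hgz₂⟩⟩ := hcon
  have hfc : ContinuousAt f z₁ :=
    (hf.differentiableAt (hUopen.mem_nhds hz₁)).continuousAt
  have hev : g =ᶠ[nhds z₁] 0 := by
    filter_upwards [hfc.eventually_ne hfz₁, hUopen.mem_nhds hz₁] with z hz hzU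
    rcases mul_eq_zero.mp (h z hzU) with h1 | h2
    · exact absurd h1 hz
    · exact h2
  exact hgz₂ ((hg.analyticOnNhd hUopen).eqOn_zero_of_preconnected_of_eventuallyEq_zero
    hUconn hz₁ hev hz₂)

lemma key {U : Set ℂ} (hUopen : IsOpen U) (hUconn : IsPreconnected U) :
    ∀ (n : ℕ) (p : Fin n → Polynomial ℂ) (s : Fin n → ℂ → ℂ),
    (∀ j, DifferentiableOn ℂ (s j) U) →
    (∀ j, ∀ z ∈ U, (s j z)^2 = (p j).eval z) →
    ∀ R : MvPolynomial (Fin (n+1)) ℂ,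
    (∀ z ∈ U, MvPolynomial.eval (Fin.snoc (fun j => s j z) z : Fin (n+1) → ℂ) R = 0)
    ∨ {z ∈ U | MvPolynomial.eval (Fin.snoc (fun j => s j z) z : Fin (n+1) → ℂ) R = 0}.Finite := by
  intro n
  induction n with
  | zero =>
    intro p s hs hsq R
    have hv : ∀ z : ℂ, (Fin.snoc (fun j => s j z) z : Fin 1 → ℂ) = fun _ => z := by
      intro z; funext i
      have : i = Fin.last 0 := by omega
      subst this; exact Fin.snoc_last _ _
    set q : Polynomial ℂ := MvPolynomial.aeval (fun _ : Fin 1 => (Polynomial.X : Polynomial ℂ)) R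
      with hqdef
    have heval : ∀ z : ℂ, Polynomial.eval z q = MvPolynomial.eval (fun _ => z) R := by
      intro z
      rw [hqdef]
      induction R using MvPolynomial.induction_on with
      | C a => simp
      | add p q hp hq => simp [hp, hq]
      | mul_X p i hp => simp [hp]
    by_cases hq : q = 0
    · left; intro z hz; rw [hv, ← heval, hq, Polynomial.eval_zero]
    · right
      apply (Polynomial.finite_setOf_isRoot hq).subset
      rintro z ⟨hz, hz0⟩
      rw [hv, ← heval] at hz0
      exact hz0
  | succ n IH =>
    intro p s hs hsq R
    -- the remaining functions
    set s' : Fin n → ℂ → ℂ := fun j => s j.succ with hs'def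
    set p' : Fin n → Polynomial ℂ := fun j => p j.succ with hp'def
    have hs' : ∀ j, DifferentiableOn ℂ (s' j) U := fun j => hs j.succ
    have hsq' : ∀ j, ∀ z ∈ U, (s' j z)^2 = (p' j).eval z := fun j => hsq j.succ
    set v : ℂ → Fin (n+2) → ℂ := fun z => Fin.snoc (fun j => s j z) z with hvdef
    set σ : ℂ → Fin (n+1) → ℂ := fun z => Fin.snoc (fun j => s' j z) z with hσdef
    have hv : ∀ z : ℂ, v z = Fin.cons (s 0 z) (σ z) := by
      intro z; funext i
      simp only [hvdef, hσdef]
      refine Fin.cases ?_ ?_ i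
      · rw [Fin.cons_zero, show (0 : Fin (n+2)) = Fin.castSucc 0 from rfl, Fin.snoc_castSucc]
      · intro k
        rw [Fin.cons_succ]
        refine Fin.lastCases ?_ ?_ k
        · show (Fin.snoc (fun j => s j z) z : Fin (n+2) → ℂ) (Fin.last n).succ =
            (Fin.snoc (fun j => s' j z) z : Fin (n+1) → ℂ) (Fin.last n)
          rw [Fin.succ_last, Fin.snoc_last, Fin.snoc_last]
        · intro m
          show (Fin.snoc (fun j => s j z) z : Fin (n+2) → ℂ) (Fin.castSucc m).succ =
            (Fin.snoc (fun j => s' j z) z : Fin (n+1) → ℂ) (Fin.castSucc m)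
          rw [Fin.succ_castSucc, Fin.snoc_castSucc, Fin.snoc_castSucc]
    have heval : ∀ (z : ℂ) (T : MvPolynomial (Fin (n+2)) ℂ),
        MvPolynomial.eval (v z) T =
          Polynomial.eval (s 0 z)
            (Polynomial.map (MvPolynomial.eval (σ z)) (MvPolynomial.finSuccEquiv ℂ (n+1) T)) := by
      intro z T
      rw [hv z, MvPolynomial.eval_eq_eval_mv_eval']
    -- polynomial getting p 0 evaluated at the z-variable (which is `Fin.last n`)
    set P : MvPolynomial (Fin (n+1)) ℂ :=
      Polynomial.aeval (MvPolynomial.X (Fin.last n) : MvPolynomial (Fin (n+1)) ℂ) (p 0)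
      with hPdef
    have hP : ∀ z : ℂ, MvPolynomial.eval (σ z) P = (p 0).eval z := by
      intro z
      rw [hPdef]
      have hlast : σ z (Fin.last n) = z := Fin.snoc_last _ _
      induction (p 0) using Polynomial.induction_on' with
      | add f g hf hg => simp [hf, hg]
      | monomial k a => simp [Polynomial.aeval_monomial, hlast]
    set W : Polynomial (MvPolynomial (Fin (n+1)) ℂ) := Polynomial.X ^ 2 - Polynomial.C P
      with hWdef
    have hW : W.Monic := Polynomial.monic_X_pow_sub_C P two_ne_zero
    set F : Polynomial (MvPolynomial (Fin (n+1)) ℂ) := MvPolynomial.finSuccEquiv ℂ (n+1) R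
      with hFdef
    set r : Polynomial (MvPolynomial (Fin (n+1)) ℂ) := F %ₘ W with hrdef
    set A : MvPolynomial (Fin (n+1)) ℂ := r.coeff 0 with hAdef
    set B : MvPolynomial (Fin (n+1)) ℂ := r.coeff 1 with hBdef
    have hdegW : W.degree = 2 := by
      rw [hWdef]
      exact Polynomial.degree_X_pow_sub_C (by norm_num) P
    have hdr : r.degree ≤ 1 := by
      have h := Polynomial.degree_modByMonic_lt F hW
      rw [hdegW, ← hrdef] at h
      exact Order.le_of_lt_succ h
    have hr : r = Polynomial.C B * Polynomial.X + Polynomial.C A := by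
      rw [hAdef, hBdef]
      exact Polynomial.eq_X_add_C_of_degree_le_one hdr
    have hFW : F = r + W * (F /ₘ W) := by
      rw [hrdef]
      exact (Polynomial.modByMonic_add_div F W).symm
    -- key identity
    have hkey : ∀ z ∈ U, MvPolynomial.eval (v z) R =
        MvPolynomial.eval (σ z) A + s 0 z * MvPolynomial.eval (σ z) B := by
      intro z hz
      rw [heval z R, ← hFdef, hFW, hr]
      simp only [Polynomial.map_add, Polynomial.map_mul, Polynomial.map_pow, hWdef,
        Polynomial.map_sub, Polynomial.map_X, Polynomial.map_C, Polynomial.eval_add,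
        Polynomial.eval_mul, Polynomial.eval_sub, Polynomial.eval_pow, Polynomial.eval_X,
        Polynomial.eval_C]
      rw [hsq 0 z hz, ← hP z]
      ring
    set H : MvPolynomial (Fin (n+1)) ℂ := A^2 - P * B^2 with hHdef
    have hfg : ∀ z ∈ U, (MvPolynomial.eval (v z) R) *
        (MvPolynomial.eval (σ z) A - s 0 z * MvPolynomial.eval (σ z) B) =
        MvPolynomial.eval (σ z) H := by
      intro z hz
      rw [hkey z hz, hHdef]
      simp only [map_sub, map_mul, map_pow]
      rw [hP z, ← hsq 0 z hz]
      ring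
    -- analyticity of the relevant functions
    have hcomp : ∀ i : Fin (n+2), DifferentiableOn ℂ (fun z => v z i) U := by
      intro i
      refine Fin.lastCases ?_ ?_ i
      · simp only [hvdef, Fin.snoc_last]; exact differentiableOn_id
      · intro m
        simpa [hvdef, Fin.snoc_castSucc] using hs m
    have hcompσ : ∀ i : Fin (n+1), DifferentiableOn ℂ (fun z => σ z i) U := by
      intro i
      refine Fin.lastCases ?_ ?_ i
      · simp only [hσdef, Fin.snoc_last]; exact differentiableOn_id
      · intro m
        simpa [hσdef, Fin.snoc_castSucc] using hs' m
    have hfdiff : DifferentiableOn ℂ (fun z => MvPolynomial.eval (v z) R) U :=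
      diffOn_eval (fun i z => v z i) hcomp R
    have hAdiff : DifferentiableOn ℂ (fun z => MvPolynomial.eval (σ z) A) U :=
      diffOn_eval (fun i z => σ z i) hcompσ A
    have hBdiff : DifferentiableOn ℂ (fun z => MvPolynomial.eval (σ z) B) U :=
      diffOn_eval (fun i z => σ z i) hcompσ B
    have hgdiff : DifferentiableOn ℂ
        (fun z => MvPolynomial.eval (σ z) A - s 0 z * MvPolynomial.eval (σ z) B) U :=
      hAdiff.sub ((hs 0).mul hBdiff)
    -- apply the inductive hypothesis to `H`
    rcases IH p' s' hs' hsq' H with hH0 | hHfin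
    · -- H vanishes identically on U
      have hprod : ∀ z ∈ U, (MvPolynomial.eval (v z) R) *
          (MvPolynomial.eval (σ z) A - s 0 z * MvPolynomial.eval (σ z) B) = 0 := by
        intro z hz; rw [hfg z hz]; exact hH0 z hz
      rcases eqOn_zero_or_eqOn_zero hUopen hUconn hfdiff hgdiff hprod with hf0 | hg0
      · exact Or.inl hf0
      · -- A = s 0 * B on U, so R evaluates to 2 * s 0 * B
        have hfval : ∀ z ∈ U, MvPolynomial.eval (v z) R =
            2 * (s 0 z * MvPolynomial.eval (σ z) B) := by
          intro z hz
          have h1 := hg0 z hz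
          rw [hkey z hz]
          have : MvPolynomial.eval (σ z) A = s 0 z * MvPolynomial.eval (σ z) B :=
            sub_eq_zero.mp h1
          rw [this]; ring
        rcases IH p' s' hs' hsq' B with hB0 | hBfin
        · left
          intro z hz
          rw [hfval z hz, hB0 z hz]
          ring
        · by_cases hp0 : p 0 = 0
          · -- then s 0 vanishes identically
            left
            intro z hz
            have : (s 0 z)^2 = 0 := by rw [hsq 0 z hz, hp0, Polynomial.eval_zero]
            have hs0 : s 0 z = 0 := by
              exact pow_eq_zero_iff two_ne_zero |>.mp this
            rw [hfval z hz, hs0]; ring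
          · right
            apply (((Polynomial.finite_setOf_isRoot hp0).union hBfin).subset)
            rintro z ⟨hz, hz0⟩
            rw [hfval z hz] at hz0
            have : s 0 z = 0 ∨ MvPolynomial.eval (σ z) B = 0 := by
              rcases mul_eq_zero.mp hz0 with h | h
              · norm_num at h
              · exact mul_eq_zero.mp h
            rcases this with h | h
            · left
              show (p 0).IsRoot z
              have := hsq 0 z hz
              rw [h] at this
              simpa [Polynomial.IsRoot] using this.symm
            · right; exact ⟨hz, h⟩
    · -- the zero set of H on U is finite
      right
      apply hHfin.subset
      rintro z ⟨hz, hz0⟩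
      refine ⟨hz, ?_⟩
      rw [← hfg z hz, hz0, zero_mul]

/-- Let `U ⊆ ℂ` be nonempty open connected, `p₁,…,p_n` polynomials and
`s₁,…,s_n` holomorphic on `U` with `s_j² = p_j` on `U`. For a polynomial `R` in `n+1`
variables, the equation `R(z, s₁(z), …, s_n(z)) = 0` either holds identically on `U` or has
only finitely many solutions in `U`. -/
theorem roots_of_polynomial_in_radicals
    (U : Set ℂ) (hU : U.Nonempty) (hUopen : IsOpen U) (hUconn : IsConnected U)
    (n : ℕ) (p : Fin n → Polynomial ℂ) (s : Fin n → ℂ → ℂ)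
    (hs : ∀ j, DifferentiableOn ℂ (s j) U)
    (hsq : ∀ j, ∀ z ∈ U, (s j z)^2 = (p j).eval z)
    (R : MvPolynomial (Fin (n+1)) ℂ) :
    (∀ z ∈ U, MvPolynomial.eval (Fin.cases z (fun j => s j z)) R = 0)
    ∨ {z ∈ U | MvPolynomial.eval (Fin.cases z (fun j => s j z)) R = 0}.Finite := by
  set g : Fin (n+1) → Fin (n+1) := fun i => Fin.cases (Fin.last n) Fin.castSucc i with hgdef
  set R' : MvPolynomial (Fin (n+1)) ℂ := MvPolynomial.rename g R with hR'def
  have hre : ∀ z : ℂ,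
      MvPolynomial.eval (Fin.snoc (fun j => s j z) z : Fin (n+1) → ℂ) R' =
      MvPolynomial.eval (Fin.cases z (fun j => s j z) : Fin (n+1) → ℂ) R := by
    intro z
    rw [hR'def, MvPolynomial.eval_rename]
    have hfun : ((Fin.snoc (fun j => s j z) z : Fin (n+1) → ℂ) ∘ g) =
        (Fin.cases z (fun j => s j z) : Fin (n+1) → ℂ) := by
      funext i
      refine Fin.cases ?_ ?_ i
      · simp [hgdef, Function.comp, Fin.cases_zero, Fin.snoc_last]
      · intro j
        simp [hgdef, Function.comp, Fin.cases_succ, Fin.snoc_castSucc]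
    rw [hfun]
  rcases key hUopen hUconn.isPreconnected n p s hs hsq R' with h | h
  · left
    intro z hz
    rw [← hre z]
    exact h z hz
  · right
    apply h.subset
    rintro z ⟨hz, hz0⟩
    exact ⟨hz, by rw [hre z]; exact hz0⟩

end
end

section
/- Let μ be a finite Borel measure on ℝ with compact support, and let S_μ be its Cauchy–Stieltjes transform. For s ∈ ℝ, one has s ∉ supp(μ) if and only if there exists an open interval J containing s such that for every z₀ ∈ J the limit of Im S_μ(z) as z → z₀ with Im z > 0 exists and equals 0. -/
open MeasureTheory Filter

noncomputable section

/-- The Cauchy–Stieltjes transform `S_μ(z) = ∫ dμ(y)/(y − z)`. -/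
def stieltjes (μ : Measure ℝ) (z : ℂ) : ℂ := ∫ y, ((y:ℂ) - z)⁻¹ ∂μ

lemma stieltjes_ne (z : ℂ) (hz : 0 < z.im) (y : ℝ) : ((y : ℂ) - z) ≠ 0 := by
  intro h
  have := congrArg Complex.im h
  simp at this
  linarith

lemma stieltjes_integrable' (μ : Measure ℝ) [IsFiniteMeasure μ] {z : ℂ} (hz : 0 < z.im) :
    Integrable (fun y : ℝ => ((y : ℂ) - z)⁻¹) μ := by
  refine ⟨(Continuous.aestronglyMeasurable ?_), HasFiniteIntegral.of_bounded (C := (z.im)⁻¹) ?_⟩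
  · exact Continuous.inv₀ (by continuity) (stieltjes_ne z hz)
  · filter_upwards with y
    rw [norm_inv]
    apply inv_anti₀ hz
    calc z.im = |((y:ℂ) - z).im| := by simp [Complex.sub_im, abs_of_pos hz]
    _ ≤ ‖(y:ℂ) - z‖ := Complex.abs_im_le_norm _

lemma stieltjes_im_eq (μ : Measure ℝ) [IsFiniteMeasure μ] {z : ℂ} (hz : 0 < z.im) :
    (MeasureTheory.integral μ fun y : ℝ => ((y : ℂ) - z)⁻¹).im
      = ∫ y, z.im / ((y - z.re) ^ 2 + z.im ^ 2) ∂μ := by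
  simp only [← RCLike.im_eq_complex_im]
  rw [← integral_im (stieltjes_integrable' μ hz)]
  refine integral_congr_ae (Eventually.of_forall fun y => ?_)
  have : (((y:ℂ) - z)⁻¹).im = z.im / ((y - z.re) ^ 2 + z.im ^ 2) := by
    rw [Complex.inv_im, Complex.normSq_apply]
    simp [Complex.sub_re, Complex.sub_im]
    ring
  simpa using this

lemma stieltjes_im_nonneg (μ : Measure ℝ) [IsFiniteMeasure μ] {z : ℂ} (hz : 0 < z.im) :
    0 ≤ (stieltjes μ z).im := by
  rw [stieltjes, stieltjes_im_eq μ hz]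
  apply integral_nonneg
  intro y
  positivity

lemma forward_dir (μ : Measure ℝ) [IsFiniteMeasure μ] {c d z₀ : ℝ}
    (hμcd : μ (Set.Ioo c d) = 0) (hz₀ : z₀ ∈ Set.Ioo c d) :
    Tendsto (fun z : ℂ => (stieltjes μ z).im)
      (nhdsWithin ((z₀ : ℝ) : ℂ) {z : ℂ | 0 < z.im}) (nhds 0) := by
  obtain ⟨hc, hd⟩ := hz₀
  set δ : ℝ := min (z₀ - c) (d - z₀) with hδdef
  have hδ0 : 0 < δ := lt_min (by linarith) (by linarith)
  set C : ℝ := (μ Set.univ).toReal * ((δ / 2) ^ 2)⁻¹ with hC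
  have hC0 : 0 ≤ C := by positivity
  apply squeeze_zero'
  · filter_upwards [self_mem_nhdsWithin] with z hz
    exact stieltjes_im_nonneg μ hz
  · -- upper bound : f z ≤ C * Complex.abs (z - z₀)
    have hball : Metric.ball ((z₀:ℝ):ℂ) (δ / 2) ∈ nhdsWithin ((z₀:ℝ):ℂ) {z : ℂ | 0 < z.im} :=
      nhdsWithin_le_nhds (Metric.ball_mem_nhds _ (by positivity))
    filter_upwards [self_mem_nhdsWithin, hball] with z hz hzb
    have hzim : (0:ℝ) < z.im := hz
    have hdist : ‖z - z₀‖ < δ / 2 := by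
      rwa [Metric.mem_ball, Complex.dist_eq] at hzb
    have hre : |z.re - z₀| < δ / 2 := by
      calc |z.re - z₀| = |(z - z₀).re| := by simp [Complex.sub_re]
      _ ≤ ‖z - z₀‖ := Complex.abs_re_le_norm _
      _ < δ / 2 := hdist
    have key : (stieltjes μ z).im ≤ (μ Set.univ).toReal * (z.im * ((δ / 2) ^ 2)⁻¹) := by
      rw [stieltjes, stieltjes_im_eq μ hzim]
      have hae : ∀ᵐ y ∂μ, z.im / ((y - z.re) ^ 2 + z.im ^ 2)
          ≤ z.im * ((δ / 2) ^ 2)⁻¹ := by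
        have : ∀ᵐ y ∂μ, y ∉ Set.Ioo c d := by
          rw [ae_iff]; simp only [not_not, Set.setOf_mem_eq]; exact hμcd
        filter_upwards [this] with y hy
        have hy' : y ≤ c ∨ d ≤ y := by
          by_contra h
          push_neg at h
          exact hy ⟨h.1, h.2⟩
        have hyd : δ / 2 ≤ |y - z.re| := by
          rcases hy' with h | h
          · have h1 : δ ≤ z₀ - c := min_le_left _ _
            rw [abs_sub_comm, le_abs]
            left; linarith [abs_lt.mp hre]
          · have h1 : δ ≤ d - z₀ := min_le_right _ _
            rw [le_abs]
            left; linarith [abs_lt.mp hre]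
        have hsq : (δ / 2) ^ 2 ≤ (y - z.re) ^ 2 + z.im ^ 2 := by
          nlinarith [sq_abs (y - z.re), sq_nonneg z.im, sq_nonneg (y - z.re)]
        have hle : z.im / ((y - z.re) ^ 2 + z.im ^ 2) ≤ z.im / ((δ / 2) ^ 2) :=
          div_le_div_of_nonneg_left hzim.le (by positivity) hsq
        rwa [div_eq_mul_inv] at hle
      calc ∫ y, z.im / ((y - z.re) ^ 2 + z.im ^ 2) ∂μ
          ≤ ∫ _, z.im * ((δ / 2) ^ 2)⁻¹ ∂μ := by
            apply integral_mono_ae ?_ (integrable_const _) hae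
            have := (stieltjes_integrable' μ hzim).im
            refine this.congr (Eventually.of_forall fun y => ?_)
            show (((y:ℂ) - z)⁻¹).im = z.im / ((y - z.re) ^ 2 + z.im ^ 2)
            rw [Complex.inv_im, Complex.normSq_apply]
            simp [Complex.sub_re, Complex.sub_im]
            ring
        _ = (μ Set.univ).toReal * (z.im * ((δ / 2) ^ 2)⁻¹) := by
            rw [integral_const]; simp [smul_eq_mul, Measure.real]
    calc (stieltjes μ z).im ≤ (μ Set.univ).toReal * (z.im * ((δ / 2) ^ 2)⁻¹) := key
      _ ≤ (μ Set.univ).toReal * (‖z - z₀‖ * ((δ / 2) ^ 2)⁻¹) := by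
          have him : z.im ≤ ‖z - z₀‖ := by
            calc z.im = (z - z₀).im := by simp [Complex.sub_im]
            _ ≤ |(z - z₀).im| := le_abs_self _
            _ ≤ ‖z - z₀‖ := Complex.abs_im_le_norm _
          gcongr
      _ = C * ‖z - z₀‖ := by rw [hC]; ring
  · -- tendsto of the bound
    have hcont : Continuous fun z : ℂ => C * ‖z - ((z₀:ℝ):ℂ)‖ := by
      continuity
    have h := (hcont.tendsto ((z₀:ℝ):ℂ)).mono_left
      (nhdsWithin_le_nhds (s := {z : ℂ | 0 < z.im}))
    simpa using h

lemma backward_null (μ : Measure ℝ) [IsFiniteMeasure μ] {c d : ℝ}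
    (H : ∀ z₀ ∈ Set.Ioo c d,
      Tendsto (fun z : ℂ => (stieltjes μ z).im)
        (nhdsWithin ((z₀ : ℝ) : ℂ) {z : ℂ | 0 < z.im}) (nhds 0)) :
    μ (Set.Ioo c d) = 0 := by
  have main : ∀ ε : ℝ, 0 < ε →
      μ (Set.Ioo c d) ≤ ENNReal.ofReal ε * volume (Set.Ioo c d) := by
    intro ε hε
    haveI : IsLocallyFiniteMeasure (ENNReal.ofReal ε • (volume : Measure ℝ)) := by
      constructor
      intro x
      refine ⟨Metric.ball x 1, Metric.ball_mem_nhds _ one_pos, ?_⟩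
      rw [Measure.smul_apply, smul_eq_mul]
      exact ENNReal.mul_lt_top ENNReal.ofReal_lt_top (by
        simpa using (Metric.isBounded_ball (x := x) (r := 1)).measure_lt_top)
    have hmain := VitaliFamily.measure_le_of_frequently_le
      (v := Besicovitch.vitaliFamily μ) (ENNReal.ofReal ε • (volume : Measure ℝ))
      Measure.AbsolutelyContinuous.rfl (Set.Ioo c d) ?_
    · simpa using hmain
    intro x hx
    apply (Besicovitch.tendsto_filterAt μ x).frequently
    apply Eventually.frequently
    have hcomp : Tendsto (fun r : ℝ => ((x:ℝ):ℂ) + r * Complex.I) (nhdsWithin (0:ℝ) (Set.Ioi 0))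
        (nhdsWithin ((x:ℝ):ℂ) {z : ℂ | 0 < z.im}) := by
      rw [tendsto_nhdsWithin_iff]
      constructor
      · have hco : Continuous fun r : ℝ => ((x:ℝ):ℂ) + r * Complex.I := by continuity
        have h := (hco.tendsto 0).mono_left (nhdsWithin_le_nhds (s := Set.Ioi (0:ℝ)))
        simpa using h
      · filter_upwards [self_mem_nhdsWithin] with r hr
        simpa using (hr : (0:ℝ) < r)
    have h2 : Tendsto (fun r : ℝ => (stieltjes μ (((x:ℝ):ℂ) + r * Complex.I)).im)
        (nhdsWithin (0:ℝ) (Set.Ioi 0)) (nhds 0) := (H x hx).comp hcomp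
    have h3 : ∀ᶠ (r : ℝ) in nhdsWithin (0:ℝ) (Set.Ioi 0),
        (stieltjes μ (((x:ℝ):ℂ) + r * Complex.I)).im < ε :=
      h2.eventually (eventually_lt_nhds hε)
    filter_upwards [h3, self_mem_nhdsWithin] with r hrS hr0
    have hr0' : (0:ℝ) < r := hr0
    set z : ℂ := ((x:ℝ):ℂ) + r * Complex.I with hzdef
    have hzre : z.re = x := by simp [hzdef]
    have hzim : z.im = r := by simp [hzdef]
    have hzim0 : 0 < z.im := by rw [hzim]; exact hr0'
    have key : (μ (Metric.closedBall x r)).toReal ≤ ε * (2 * r) := by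
      have hIm : (stieltjes μ z).im = ∫ y, r / ((y - x) ^ 2 + r ^ 2) ∂μ := by
        rw [stieltjes, stieltjes_im_eq μ hzim0, hzre, hzim]
      have hint : Integrable (fun y : ℝ => r / ((y - x) ^ 2 + r ^ 2)) μ := by
        have h := (stieltjes_integrable' μ hzim0).im
        refine h.congr (Eventually.of_forall fun y => ?_)
        show (((y:ℂ) - z)⁻¹).im = _
        rw [Complex.inv_im, Complex.normSq_apply]
        simp [Complex.sub_re, Complex.sub_im, hzre, hzim]
        ring
      have h4 : (1 / (2 * r)) * (μ (Metric.closedBall x r)).toReal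
          ≤ ∫ y in Metric.closedBall x r, r / ((y - x) ^ 2 + r ^ 2) ∂μ := by
        apply setIntegral_ge_of_const_le_real measurableSet_closedBall (measure_ne_top μ _)
        · intro y hy
          have hyx : |y - x| ≤ r := by
            rwa [Metric.mem_closedBall, Real.dist_eq] at hy
          rw [div_le_div_iff₀ (by positivity) (by positivity)]
          nlinarith [sq_abs (y - x), mul_self_le_mul_self (abs_nonneg (y - x)) hyx]
        · exact hint.integrableOn
      have h5 : ∫ y in Metric.closedBall x r, r / ((y - x) ^ 2 + r ^ 2) ∂μ
          ≤ (stieltjes μ z).im := by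
        rw [hIm]
        refine setIntegral_le_integral hint ?_
        filter_upwards with y
        positivity
      have h6 : (1 / (2 * r)) * (μ (Metric.closedBall x r)).toReal ≤ ε :=
        le_trans h4 (le_trans h5 hrS.le)
      rw [one_div, inv_mul_le_iff₀ (by positivity)] at h6
      linarith
    have hcb : μ (Metric.closedBall x r) ≤ ENNReal.ofReal (ε * (2 * r)) :=
      (ENNReal.le_ofReal_iff_toReal_le (measure_ne_top μ _) (by positivity)).mpr key
    refine le_trans hcb ?_
    rw [Measure.smul_apply, smul_eq_mul, Real.volume_closedBall,
      ← ENNReal.ofReal_mul hε.le]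
  -- now let ε → 0
  have hV : volume (Set.Ioo c d) ≠ ⊤ := (measure_Ioo_lt_top).ne
  have htend : Tendsto (fun ε : ℝ => ENNReal.ofReal ε * volume (Set.Ioo c d))
      (nhdsWithin (0:ℝ) (Set.Ioi 0)) (nhds 0) := by
    have h1 : Tendsto (fun ε : ℝ => ENNReal.ofReal ε) (nhdsWithin (0:ℝ) (Set.Ioi 0))
        (nhds 0) := by
      have := (ENNReal.continuous_ofReal.tendsto 0).mono_left
        (nhdsWithin_le_nhds (s := Set.Ioi (0:ℝ)))
      simpa using this
    simpa using ENNReal.Tendsto.mul_const h1 (Or.inr hV)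
  have h0 : μ (Set.Ioo c d) ≤ 0 := by
    refine ge_of_tendsto htend ?_
    filter_upwards [self_mem_nhdsWithin] with ε hε
    exact main ε hε
  simpa using h0

/-- For a compactly supported finite Borel measure `μ` on `ℝ` and `s ∈ ℝ`,
one has `s ∉ supp(μ)` iff there is an open interval `J ∋ s` such that for every `z₀ ∈ J`,
`Im S_μ(z) → 0` as `z → z₀` with `Im z > 0`. -/
theorem not_mem_support_iff_stieltjes_imaginary_vanishes
    (μ : Measure ℝ) [IsFiniteMeasure μ]
    (hμK : ∃ K : Set ℝ, IsCompact K ∧ μ Kᶜ = 0) (s : ℝ) :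
    s ∉ msupport μ ↔
      ∃ c d : ℝ, c < s ∧ s < d ∧ ∀ z₀ ∈ Set.Ioo c d,
        Tendsto (fun z : ℂ => (stieltjes μ z).im)
          (nhdsWithin ((z₀ : ℝ) : ℂ) {z : ℂ | 0 < z.im}) (nhds 0) := by
  constructor
  · intro hs
    simp only [msupport, Set.mem_setOf_eq, not_forall] at hs
    obtain ⟨U, hUo, hsU, hU0⟩ := hs
    have hU0' : μ U = 0 := le_zero_iff.mp (not_lt.mp hU0)
    obtain ⟨c, d, hmem, hsub⟩ := mem_nhds_iff_exists_Ioo_subset.mp (hUo.mem_nhds hsU)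
    refine ⟨c, d, hmem.1, hmem.2, fun z₀ hz₀ => ?_⟩
    exact forward_dir μ (measure_mono_null hsub hU0') hz₀
  · rintro ⟨c, d, hc, hd, H⟩ hmem
    have hpos := hmem (Set.Ioo c d) isOpen_Ioo ⟨hc, hd⟩
    rw [backward_null μ H] at hpos
    exact lt_irrefl 0 hpos

end
end

section
/- Let A be a nonzero bounded linear operator on a complex Hilbert space, let λ ∈ ℂ, and let R ∈ ℝ with R ≥ 2‖A‖. Then λ ∈ σ(A) if and only if 1 ∈ σ(I − R⁻²(A − λI)(A − λI)*) ∪ σ(I − R⁻²(A − λI)*(A − λI)), where I denotes the identity operator. -/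
noncomputable section

private lemma isUnit_of_left_right {M : Type*} [Monoid M] {b l r : M}
    (hl : l * b = 1) (hr : b * r = 1) : IsUnit b := by
  have hlr : l = r := by
    calc l = l * (b * r) := by rw [hr, mul_one]
    _ = (l * b) * r := by rw [mul_assoc]
    _ = r := by rw [hl, one_mul]
  exact ⟨⟨b, r, hr, hlr ▸ hl⟩, rfl⟩

private lemma isUnit_smul_iff' {A : Type*} [Ring A] [Algebra ℂ A] {c : ℂ} (hc : c ≠ 0)
    (x : A) : IsUnit (c • x) ↔ IsUnit x := by
  rw [Algebra.smul_def]
  have hu : IsUnit (algebraMap ℂ A c) :=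
    (isUnit_iff_ne_zero.mpr hc).map (algebraMap ℂ A)
  obtain ⟨u, hu⟩ := hu
  rw [← hu]
  exact u.isUnit_units_mul x

/-- For a nonzero bounded operator `A` on a complex Hilbert space,
`λ ∈ ℂ` and `R ≥ 2‖A‖`, one has `λ ∈ σ(A)` iff
`1 ∈ σ(I − R⁻²(A−λI)(A−λI)*) ∪ σ(I − R⁻²(A−λI)*(A−λI))`. -/
theorem spectrum_mem_iff_one_mem
    {E : Type*} [NormedAddCommGroup E] [InnerProductSpace ℂ E] [CompleteSpace E]
    (A : E →L[ℂ] E) (hA : A ≠ 0) (lam : ℂ) (R : ℝ) (hR : 2 * ‖A‖ ≤ R) :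
    lam ∈ spectrum ℂ A ↔
      (1 : ℂ) ∈
        spectrum ℂ ((1 : E →L[ℂ] E) - ((R:ℂ)^2)⁻¹ •
            ((A - lam • (1 : E →L[ℂ] E))
              * ContinuousLinearMap.adjoint (A - lam • (1 : E →L[ℂ] E))))
        ∪ spectrum ℂ ((1 : E →L[ℂ] E) - ((R:ℂ)^2)⁻¹ •
            (ContinuousLinearMap.adjoint (A - lam • (1 : E →L[ℂ] E))
              * (A - lam • (1 : E →L[ℂ] E)))) := by
  have hApos : (0:ℝ) < ‖A‖ := norm_pos_iff.mpr hA
  have hRpos : (0:ℝ) < R := lt_of_lt_of_le (by linarith) hR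
  have hRne : (R:ℂ) ≠ 0 := by exact_mod_cast hRpos.ne'
  have hc : (((R:ℂ)^2)⁻¹ : ℂ) ≠ 0 := inv_ne_zero (pow_ne_zero _ hRne)
  set B : E →L[ℂ] E := A - lam • (1 : E →L[ℂ] E) with hB
  have hadj : ContinuousLinearMap.adjoint B = star B :=
    (ContinuousLinearMap.star_eq_adjoint B).symm
  -- λ ∈ σ(A) ↔ ¬ IsUnit B
  have h1 : lam ∈ spectrum ℂ A ↔ ¬ IsUnit B := by
    rw [spectrum.mem_iff]
    have : algebraMap ℂ (E →L[ℂ] E) lam - A = -B := by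
      rw [Algebra.algebraMap_eq_smul_one, hB]; abel
    rw [this, IsUnit.neg_iff]
  -- 1 ∈ σ(1 - c•T) ↔ ¬ IsUnit T
  have h2 : ∀ T : E →L[ℂ] E,
      (1:ℂ) ∈ spectrum ℂ ((1 : E →L[ℂ] E) - ((R:ℂ)^2)⁻¹ • T) ↔ ¬ IsUnit T := by
    intro T
    rw [spectrum.mem_iff]
    have : algebraMap ℂ (E →L[ℂ] E) 1 - ((1 : E →L[ℂ] E) - ((R:ℂ)^2)⁻¹ • T)
        = ((R:ℂ)^2)⁻¹ • T := by
      rw [map_one]; abel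
    rw [this, isUnit_smul_iff' hc]
  rw [h1, Set.mem_union, h2, h2, hadj]
  -- Now: ¬ IsUnit B ↔ ¬ IsUnit (B * star B) ∨ ¬ IsUnit (star B * B)
  constructor
  · intro h
    by_contra hcon
    push_neg at hcon
    obtain ⟨h₁, h₂⟩ := hcon
    obtain ⟨u, hu⟩ := h₂
    obtain ⟨v, hv⟩ := h₁
    have hl : ((↑u⁻¹ : E →L[ℂ] E) * star B) * B = 1 := by
      rw [mul_assoc, ← hu, u.inv_mul]
    have hr : B * (star B * (↑v⁻¹ : E →L[ℂ] E)) = 1 := by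
      rw [← mul_assoc, ← hv, v.mul_inv]
    exact h (isUnit_of_left_right hl hr)
  · rintro (h | h) hB'
    · exact h (hB'.mul hB'.star)
    · exact h (hB'.star.mul hB')

end
end

section
/- Let λ ∈ ℝ and let f : {1,2,3,…} → ℂ satisfy Σ_{j≥1} |f(j)|² < ∞ and f(j+2) − λ·f(j+1) + f(j) = 0 for all j ≥ 1. If f is not identically zero, then |λ| > 2 and there exists a constant c ≠ 0 such that f(j) = c·t₁^j for all j ≥ 1, where t₁ = (λ − sgn(λ)·√(λ² − 4))/2. -/
noncomputable section

open Filter Topology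

private lemma two_step_induction {P : ℕ → Prop} (h0 : P 0) (h1 : P 1)
    (hs : ∀ n, P n → P (n + 1) → P (n + 2)) : ∀ n, P n := by
  have key : ∀ n, P n ∧ P (n + 1) := by
    intro n
    induction n with
    | zero => exact ⟨h0, h1⟩
    | succ k ih => exact ⟨ih.2, hs k ih.1 ih.2⟩
  exact fun n => (key n).1

private lemma closed_form {t₁ t₂ : ℂ} (h2 : t₁ * t₂ = 1) {g : ℕ → ℂ}
    (hg : ∀ n, g (n + 2) = (t₁ + t₂) * g (n + 1) - g n) {A B : ℂ}
    (h0 : g 0 = A + B) (h1 : g 1 = A * t₁ + B * t₂) :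
    ∀ n, g n = A * t₁ ^ n + B * t₂ ^ n := by
  refine two_step_induction (P := fun n => g n = A * t₁ ^ n + B * t₂ ^ n)
    (by simpa using h0) (by simpa using h1) ?_
  intro n hn hn1
  rw [hg n, hn, hn1]
  linear_combination (A * t₁ ^ n + B * t₂ ^ n) * h2

private lemma closed_form_double {t : ℂ} (ht : t * t = 1) {g : ℕ → ℂ}
    (hg : ∀ n, g (n + 2) = (2 * t) * g (n + 1) - g n) :
    ∀ n, g n = (g 0 + (t * g 1 - g 0) * n) * t ^ n := by
  refine two_step_induction
    (P := fun n => g n = (g 0 + (t * g 1 - g 0) * n) * t ^ n) (by simp) ?_ ?_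
  · push_cast
    linear_combination (-(g 1)) * ht
  · intro n hn hn1
    rw [hg n, hn, hn1]
    push_cast
    linear_combination (g 0 + (t * g 1 - g 0) * (n : ℂ)) * t ^ n * ht

private lemma norm_le_zero_of_tendsto {u : ℕ → ℂ} (hu : Tendsto u atTop (𝓝 0))
    {c : ℝ} (hc : ∀ n, c ≤ ‖u n‖) : c ≤ 0 := by
  have h : Tendsto (fun n => ‖u n‖) atTop (𝓝 0) :=
    tendsto_zero_iff_norm_tendsto_zero.mp hu
  exact ge_of_tendsto' h hc

/-- A nonzero square-summable solution of the recurrence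
`f(j+2) − λf(j+1) + f(j) = 0` on `{1,2,3,…}` forces `|λ| > 2` and
`f(j) = c·t₁^j` with `t₁ = (λ − sgn(λ)√(λ²−4))/2`. -/
theorem l2_solution_of_recurrence
    (lam : ℝ) (f : ℕ+ → ℂ)
    (hsum : Summable (fun j : ℕ+ => ‖f j‖^2))
    (hrec : ∀ j : ℕ+, f (j + 2) - (lam:ℂ) * f (j + 1) + f j = 0)
    (hne : f ≠ 0) :
    2 < |lam| ∧ ∃ c : ℂ, c ≠ 0 ∧ ∀ j : ℕ+,
      f j = c * ((((lam - Real.sign lam * Real.sqrt (lam^2 - 4)) / 2 : ℝ) : ℂ)) ^ (j : ℕ) := by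
  -- shift to `ℕ`
  set g : ℕ → ℂ := fun n => f n.succPNat with hgdef
  have hfg : ∀ j : ℕ+, f j = g j.natPred := by
    intro j
    simp only [hgdef, PNat.succPNat_natPred]
  have hg : ∀ n, g (n + 2) = (lam : ℂ) * g (n + 1) - g n := by
    intro n
    have h := hrec n.succPNat
    have e1 : n.succPNat + 2 = (n + 2).succPNat := by
      apply PNat.coe_injective; rfl
    have e2 : n.succPNat + 1 = (n + 1).succPNat := by
      apply PNat.coe_injective; rfl
    rw [e1, e2] at h
    have h' : g (n + 2) - (lam : ℂ) * g (n + 1) + g n = 0 := h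
    linear_combination h'
  -- `g` tends to zero
  have htend : Tendsto g atTop (𝓝 0) := by
    have h1 : Tendsto (fun j : ℕ+ => ‖f j‖ ^ 2) cofinite (𝓝 0) :=
      hsum.tendsto_cofinite_zero
    have h2 : Tendsto (fun n : ℕ => ‖g n‖ ^ 2) atTop (𝓝 0) := by
      rw [← Nat.cofinite_eq_atTop]
      exact h1.comp (Nat.succPNat_injective.tendsto_cofinite)
    have h3 : Tendsto (fun n : ℕ => ‖g n‖) atTop (𝓝 0) := by
      have h4 := h2.sqrt
      simp only [Real.sqrt_sq (norm_nonneg _), Real.sqrt_zero] at h4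
      exact h4
    exact tendsto_zero_iff_norm_tendsto_zero.mpr h3
  -- `g` is not identically zero
  obtain ⟨j₀, hj₀⟩ : ∃ j, f j ≠ 0 := Function.ne_iff.mp hne
  have hgne : g j₀.natPred ≠ 0 := by rw [← hfg]; exact hj₀
  have hgshift : Tendsto (fun n => g (n + 1)) atTop (𝓝 0) :=
    htend.comp (tendsto_add_atTop_nat 1)
  rcases lt_trichotomy (lam ^ 2) 4 with hlt | heq | hgt
  · -- |lam| < 2 : impossible
    exfalso
    set d : ℝ := Real.sqrt (4 - lam ^ 2) with hddef
    have hd2 : d ^ 2 = 4 - lam ^ 2 := Real.sq_sqrt (by linarith)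
    have hdpos : 0 < d := Real.sqrt_pos.mpr (by linarith)
    set t₁ : ℂ := ((lam : ℂ) + Complex.I * d) / 2 with ht1def
    set t₂ : ℂ := ((lam : ℂ) - Complex.I * d) / 2 with ht2def
    have hd2c : (d : ℂ) ^ 2 = 4 - (lam : ℂ) ^ 2 := by exact_mod_cast hd2
    have hprod : t₁ * t₂ = 1 := by
      rw [ht1def, ht2def]
      linear_combination (-(d:ℂ)^2/4) * Complex.I_sq + (1/4 : ℂ) * hd2c
    have hsum12 : t₁ + t₂ = (lam : ℂ) := by rw [ht1def, ht2def]; ring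
    have hne12 : t₁ - t₂ ≠ 0 := by
      rw [ht1def, ht2def]
      have he : ((lam : ℂ) + Complex.I * d) / 2 - ((lam : ℂ) - Complex.I * d) / 2
          = Complex.I * d := by ring
      rw [he]
      simp [Complex.I_ne_zero, Complex.ofReal_eq_zero, hdpos.ne']
    have hnorm1 : ‖t₁‖ = 1 := by
      have hre : t₁.re = lam / 2 := by simp [ht1def]
      have him : t₁.im = d / 2 := by simp [ht1def]
      have hnsq : Complex.normSq t₁ = 1 := by
        rw [Complex.normSq_apply, hre, him]; nlinarith [hd2]
      show ‖t₁‖ = 1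
      rw [Complex.norm_def, hnsq, Real.sqrt_one]
    have hnorm2 : ‖t₂‖ = 1 := by
      have hre : t₂.re = lam / 2 := by simp [ht2def]
      have him : t₂.im = -(d / 2) := by simp [ht2def]; ring
      have hnsq : Complex.normSq t₂ = 1 := by
        rw [Complex.normSq_apply, hre, him]; nlinarith [hd2]
      show ‖t₂‖ = 1
      rw [Complex.norm_def, hnsq, Real.sqrt_one]
    set A : ℂ := (g 1 - t₂ * g 0) / (t₁ - t₂) with hAdef
    set B : ℂ := (t₁ * g 0 - g 1) / (t₁ - t₂) with hBdef
    have h0 : g 0 = A + B := by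
      rw [hAdef, hBdef]; field_simp; ring
    have h1 : g 1 = A * t₁ + B * t₂ := by
      rw [hAdef, hBdef]; field_simp; ring
    have hg' : ∀ n, g (n + 2) = (t₁ + t₂) * g (n + 1) - g n := by
      intro n; rw [hsum12]; exact hg n
    have hcf := closed_form hprod hg' h0 h1
    have hA : A = 0 := by
      have hu : Tendsto (fun n => g (n + 1) - t₂ * g n) atTop (𝓝 0) := by
        have := hgshift.sub (htend.const_mul t₂)
        simpa using this
      have hc : ∀ n, ‖A * (t₁ - t₂)‖ ≤ ‖g (n + 1) - t₂ * g n‖ := by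
        intro n
        have he : g (n + 1) - t₂ * g n = A * (t₁ - t₂) * t₁ ^ n := by
          rw [hcf (n + 1), hcf n]; ring
        rw [he]; simp [norm_mul, norm_pow, hnorm1]
      have hle := norm_le_zero_of_tendsto hu hc
      have h0' : A * (t₁ - t₂) = 0 :=
        norm_eq_zero.mp (le_antisymm hle (norm_nonneg _))
      rcases mul_eq_zero.mp h0' with h | h
      · exact h
      · exact absurd h hne12
    have hB : B = 0 := by
      have hu : Tendsto (fun n => g (n + 1) - t₁ * g n) atTop (𝓝 0) := by
        have := hgshift.sub (htend.const_mul t₁)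
        simpa using this
      have hc : ∀ n, ‖B * (t₂ - t₁)‖ ≤ ‖g (n + 1) - t₁ * g n‖ := by
        intro n
        have he : g (n + 1) - t₁ * g n = B * (t₂ - t₁) * t₂ ^ n := by
          rw [hcf (n + 1), hcf n]; ring
        rw [he]; simp [norm_mul, norm_pow, hnorm2]
      have hle := norm_le_zero_of_tendsto hu hc
      have h0' : B * (t₂ - t₁) = 0 :=
        norm_eq_zero.mp (le_antisymm hle (norm_nonneg _))
      rcases mul_eq_zero.mp h0' with h | h
      · exact h
      · exact absurd h (by simpa [neg_sub] using (neg_ne_zero.mpr hne12))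
    apply hgne
    rw [hcf, hA, hB]; simp
  · -- |lam| = 2 : impossible
    exfalso
    set t : ℂ := (lam : ℂ) / 2 with htdef
    have hl4 : (lam : ℂ) ^ 2 = 4 := by exact_mod_cast heq
    have ht2 : t * t = 1 := by
      rw [htdef]
      linear_combination (1/4 : ℂ) * hl4
    have hnormt : ‖t‖ = 1 := by
      have habs : |lam| = 2 := by
        have h' : |lam| ^ 2 = 2 ^ 2 := by rw [sq_abs, heq]; norm_num
        nlinarith [abs_nonneg lam]
      rw [htdef, norm_div]
      simp [Complex.norm_real, Real.norm_eq_abs, habs]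
    have hg' : ∀ n, g (n + 2) = (2 * t) * g (n + 1) - g n := by
      intro n
      have he : (2 : ℂ) * t = (lam : ℂ) := by rw [htdef]; ring
      rw [he]; exact hg n
    have hcf := closed_form_double ht2 hg'
    have hD : t * g 1 - g 0 = 0 := by
      have hu : Tendsto (fun n => g (n + 1) - t * g n) atTop (𝓝 0) := by
        have := hgshift.sub (htend.const_mul t)
        simpa using this
      have hc : ∀ n, ‖t * g 1 - g 0‖ ≤ ‖g (n + 1) - t * g n‖ := by
        intro n
        have he : g (n + 1) - t * g n = (t * g 1 - g 0) * t ^ (n + 1) := by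
          rw [hcf (n + 1), hcf n]
          push_cast
          ring
        rw [he]; simp [norm_mul, norm_pow, hnormt]
      have hle := norm_le_zero_of_tendsto hu hc
      exact norm_eq_zero.mp (le_antisymm hle (norm_nonneg _))
    have hC : g 0 = 0 := by
      have hc : ∀ n, ‖g 0‖ ≤ ‖g n‖ := by
        intro n
        have he : g n = g 0 * t ^ n := by
          rw [hcf n, hD]; ring
        rw [he]; simp [norm_mul, norm_pow, hnormt]
      have hle := norm_le_zero_of_tendsto htend hc
      exact norm_eq_zero.mp (le_antisymm hle (norm_nonneg _))
    apply hgne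
    rw [hcf, hD, hC]; simp
  · -- |lam| > 2
    have habs : 2 < |lam| := by nlinarith [abs_nonneg lam, sq_abs lam]
    have hlamne : lam ≠ 0 := by
      intro h; rw [h] at habs; simp at habs; linarith
    set s : ℝ := Real.sign lam with hsdef
    have hs2 : s * s = 1 := by
      rcases lt_or_gt_of_ne hlamne with h | h
      · rw [hsdef, Real.sign_of_neg h]; norm_num
      · rw [hsdef, Real.sign_of_pos h]; norm_num
    set r : ℝ := Real.sqrt (lam ^ 2 - 4) with hrdef
    have hr2 : r ^ 2 = lam ^ 2 - 4 := Real.sq_sqrt (by linarith)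
    have hrpos : 0 < r := Real.sqrt_pos.mpr (by linarith)
    set t1r : ℝ := (lam - s * r) / 2 with ht1rdef
    set t2r : ℝ := (lam + s * r) / 2 with ht2rdef
    have hprodr : t1r * t2r = 1 := by
      rw [ht1rdef, ht2rdef]
      linear_combination (-(r ^ 2) / 4) * hs2 + (-1 / 4 : ℝ) * hr2
    have ht2big : 1 < |t2r| := by
      rcases lt_or_gt_of_ne hlamne with h | h
      · have hs : s = -1 := by rw [hsdef, Real.sign_of_neg h]
        have hlam2 : lam < -2 := by rw [abs_of_neg h] at habs; linarith
        have hneg : t2r < -1 := by rw [ht2rdef, hs]; nlinarith [hrpos]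
        rw [abs_of_neg (by linarith)]; linarith
      · have hs : s = 1 := by rw [hsdef, Real.sign_of_pos h]
        have hlam2 : 2 < lam := by rw [abs_of_pos h] at habs; linarith
        have hpos : 1 < t2r := by rw [ht2rdef, hs]; nlinarith [hrpos]
        rw [abs_of_pos (by linarith)]; linarith
    have ht2ne : t2r ≠ 0 := by
      intro h; rw [h] at ht2big; simp at ht2big; linarith
    have ht1small : |t1r| < 1 := by
      have h1 : |t1r| * |t2r| = 1 := by rw [← abs_mul, hprodr, abs_one]
      by_contra hcon
      push_neg at hcon
      nlinarith [abs_nonneg t1r, abs_nonneg t2r]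
    have ht1ne : t1r ≠ 0 := by
      intro h; rw [h] at hprodr; simp at hprodr
    set t₁ : ℂ := ((t1r : ℝ) : ℂ) with ht1def
    set t₂ : ℂ := ((t2r : ℝ) : ℂ) with ht2def
    have hprod : t₁ * t₂ = 1 := by
      rw [ht1def, ht2def]; exact_mod_cast hprodr
    have hsum12 : t₁ + t₂ = (lam : ℂ) := by
      rw [ht1def, ht2def, ht1rdef, ht2rdef]; push_cast; ring
    have hne12 : t₁ - t₂ ≠ 0 := by
      rw [ht1def, ht2def, sub_ne_zero]
      intro h
      have heq' : t1r = t2r := by exact_mod_cast h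
      have hsne : s ≠ 0 := by
        intro hs0; rw [hs0] at hs2; simp at hs2
      have hsr : s * r = 0 := by
        rw [ht1rdef, ht2rdef] at heq'; linarith
      rcases mul_eq_zero.mp hsr with h' | h'
      · exact hsne h'
      · exact hrpos.ne' h'
    have hnorm1 : ‖t₁‖ < 1 := by
      rw [ht1def, Complex.norm_real, Real.norm_eq_abs]; exact ht1small
    have hnorm2 : 1 ≤ ‖t₂‖ := by
      rw [ht2def, Complex.norm_real, Real.norm_eq_abs]; exact le_of_lt ht2big
    set A : ℂ := (g 1 - t₂ * g 0) / (t₁ - t₂) with hAdef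
    set B : ℂ := (t₁ * g 0 - g 1) / (t₁ - t₂) with hBdef
    have h0 : g 0 = A + B := by rw [hAdef, hBdef]; field_simp; ring
    have h1 : g 1 = A * t₁ + B * t₂ := by rw [hAdef, hBdef]; field_simp; ring
    have hg' : ∀ n, g (n + 2) = (t₁ + t₂) * g (n + 1) - g n := by
      intro n; rw [hsum12]; exact hg n
    have hcf := closed_form hprod hg' h0 h1
    have hB : B = 0 := by
      have hu : Tendsto (fun n => g n - A * t₁ ^ n) atTop (𝓝 0) := by
        have hp : Tendsto (fun n : ℕ => A * t₁ ^ n) atTop (𝓝 0) := by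
          have := (tendsto_pow_atTop_nhds_zero_of_norm_lt_one hnorm1).const_mul A
          simpa using this
        have := htend.sub hp
        simpa using this
      have hc : ∀ n, ‖B‖ ≤ ‖g n - A * t₁ ^ n‖ := by
        intro n
        have he : g n - A * t₁ ^ n = B * t₂ ^ n := by rw [hcf n]; ring
        rw [he, norm_mul, norm_pow]
        have hp : 1 ≤ ‖t₂‖ ^ n := one_le_pow₀ hnorm2
        nlinarith [norm_nonneg B]
      have hle := norm_le_zero_of_tendsto hu hc
      exact norm_eq_zero.mp (le_antisymm hle (norm_nonneg _))
    have hgA : ∀ n, g n = A * t₁ ^ n := by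
      intro n; rw [hcf n, hB]; ring
    have hAne : A ≠ 0 := by
      intro h
      apply hgne
      rw [hgA, h]; ring
    refine ⟨habs, A * t₂, ?_, ?_⟩
    · intro h
      rcases mul_eq_zero.mp h with h' | h'
      · exact hAne h'
      · rw [ht2def] at h'
        exact ht2ne (by exact_mod_cast h')
    · intro j
      rw [hfg j, hgA]
      have hn : (j : ℕ) = j.natPred + 1 := (PNat.natPred_add_one j).symm
      rw [hn, pow_succ]
      linear_combination (-(A * t₁ ^ j.natPred)) * hprod

end
end
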